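/- arXiv:2105.14297 — 2 statements merged into one kernel-verified Lean document; each statement's English description precedes it below -/
import Mathlib

section
/- (Affine two-flux case.) Let f_l(u) = p_l u + q_l and f_r(u) = p_r u + q_r with p_l ≥ 0 ≥ p_r and p_l − p_r > 0, and let u_0, u_1 ∈ ℝ. Set κ = p_l u_0 − p_r u_1 + q_l − q_r and assume κ > 0. Put ξ_0 = −p_r κ/(p_l − p_r), ξ_1 = p_l κ/(p_l − p_r), and define u_{0,ε} = u_0 + ξ_0/ε, u_{1,ε} = u_1 + ξ_1/ε. Then the shadow wave net (u_ε) is a weak asymptotic solution of ∂_t u + ∂_x f(x,u) = 0 and converges distributionally to U(x) + κ t δ(x). -/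
open MeasureTheory Filter Set Topology

/-- The shadow wave net centered at `x = 0`: for fixed `ε > 0`,
`u_ε(x,t) = u0` for `x < -εt`, `u0e` for `-εt < x < 0`,
`u1e` for `0 < x < εt` and `u1` for `x > εt`. -/
noncomputable def sdw (u0 u1 u0e u1e ε x t : ℝ) : ℝ :=
  if x < -(ε * t) then u0
  else if x < 0 then u0e
  else if x < ε * t then u1e
  else u1

/-- The two-flux function `f(x,u) = f_l(u)` for `x < 0`, `f_r(u)` for `x > 0`. -/
noncomputable def twoFlux (fl fr : ℝ → ℝ) (x u : ℝ) : ℝ :=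
  if x < 0 then fl u else fr u

/-- Test functions `φ ∈ C_c^∞(ℝ × (0,∞))`. -/
def IsTestFun (φ : ℝ × ℝ → ℝ) : Prop :=
  ContDiff ℝ (⊤ : ℕ∞) φ ∧ HasCompactSupport φ ∧ ∀ p : ℝ × ℝ, p.2 ≤ 0 → φ p = 0

/-- The net `(u_ε)` (with intermediate states `u0e ε`, `u1e ε`) is a weak asymptotic
solution of `∂_t u + ∂_x f(x,u) = 0`. -/
def WeakAsymptoticSolution (fl fr : ℝ → ℝ) (u0 u1 : ℝ) (u0e u1e : ℝ → ℝ) : Prop :=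
  ∀ φ : ℝ × ℝ → ℝ, IsTestFun φ →
    Tendsto (fun ε : ℝ =>
        ∫ t in Ioi (0:ℝ), ∫ x : ℝ,
          (sdw u0 u1 (u0e ε) (u1e ε) ε x t * fderiv ℝ φ (x, t) (0, 1) +
           twoFlux fl fr x (sdw u0 u1 (u0e ε) (u1e ε) ε x t) * fderiv ℝ φ (x, t) (1, 0)))
      (𝓝[>] (0:ℝ)) (𝓝 0)

/-- The net `(u_ε)` converges distributionally to `U(x) + k t δ(x)`,
where `U(x) = u0` for `x < 0` and `u1` for `x > 0`. -/
def ConvergesToDeltaShock (u0 u1 : ℝ) (u0e u1e : ℝ → ℝ) (k : ℝ) : Prop :=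
  ∀ φ : ℝ × ℝ → ℝ, IsTestFun φ →
    Tendsto (fun ε : ℝ =>
        ∫ t in Ioi (0:ℝ), ∫ x : ℝ, sdw u0 u1 (u0e ε) (u1e ε) ε x t * φ (x, t))
      (𝓝[>] (0:ℝ))
      (𝓝 ((∫ t in Ioi (0:ℝ), ∫ x : ℝ, (if x < 0 then u0 else u1) * φ (x, t)) +
           k * ∫ t in Ioi (0:ℝ), t * φ (0, t)))

lemma hcs2_of_vanish {g : ℝ × ℝ → ℝ} {B : ℝ} (hB : ∀ p : ℝ × ℝ, B ≤ ‖p‖ → g p = 0) :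
    HasCompactSupport g := by
  apply HasCompactSupport.intro (isCompact_closedBall (0 : ℝ × ℝ) B)
  intro p hp
  apply hB
  simp only [Metric.mem_closedBall, dist_zero_right, not_le] at hp
  exact hp.le

lemma integrable_of_bound_supp {f : ℝ → ℝ} (hm : AEStronglyMeasurable f volume) (C B : ℝ)
    (hsupp : ∀ x, B ≤ |x| → f x = 0) (hb : ∀ x, |f x| ≤ C) : Integrable f := by
  refine Integrable.mono' (g := (Icc (-B) B).indicator fun _ => C) ?_ hm ?_
  · rw [integrable_indicator_iff measurableSet_Icc]
    exact integrableOn_const (ne_of_lt (by rw [Real.volume_Icc]; exact ENNReal.ofReal_lt_top))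
  · refine Eventually.of_forall fun x => ?_
    by_cases hx : x ∈ Icc (-B) B
    · rw [indicator_of_mem hx]; exact (Real.norm_eq_abs _) ▸ hb x
    · have : B ≤ |x| := by
        simp only [mem_Icc, not_and_or, not_le] at hx
        rcases hx with h | h
        · exact le_abs.mpr (Or.inr (by linarith))
        · exact le_abs.mpr (Or.inl (by linarith))
      rw [indicator_of_notMem hx, hsupp x this]
      simp

lemma integrable_prod_of_bound_supp {F : ℝ × ℝ → ℝ}
    (hm : AEStronglyMeasurable F ((volume.restrict (Ioi (0:ℝ))).prod volume)) (C B : ℝ)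
    (hsupp : ∀ p : ℝ × ℝ, B ≤ max |p.1| |p.2| → F p = 0) (hb : ∀ p, |F p| ≤ C) :
    Integrable F ((volume.restrict (Ioi (0:ℝ))).prod volume) := by
  refine Integrable.mono' (g := (Icc (-B) B ×ˢ Icc (-B) B).indicator fun _ => C) ?_ hm ?_
  · rw [integrable_indicator_iff (measurableSet_Icc.prod measurableSet_Icc)]
    refine integrableOn_const (ne_of_lt ?_)
    rw [Measure.prod_prod]
    refine ENNReal.mul_lt_top ?_ (by rw [Real.volume_Icc]; exact ENNReal.ofReal_lt_top)
    refine lt_of_le_of_lt (le_trans (Measure.restrict_apply_le _ _) le_rfl) ?_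
    rw [Real.volume_Icc]; exact ENNReal.ofReal_lt_top
  · refine Eventually.of_forall fun p => ?_
    by_cases hp : p ∈ Icc (-B) B ×ˢ Icc (-B) B
    · rw [indicator_of_mem hp]; exact (Real.norm_eq_abs _) ▸ hb p
    · have : B ≤ max |p.1| |p.2| := by
        simp only [mem_prod, mem_Icc, not_and_or, not_le] at hp
        rcases hp with (h | h) | (h | h)
        · exact le_max_of_le_left (le_abs.mpr (Or.inr (by linarith)))
        · exact le_max_of_le_left (le_abs.mpr (Or.inl (by linarith)))
        · exact le_max_of_le_right (le_abs.mpr (Or.inr (by linarith)))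
        · exact le_max_of_le_right (le_abs.mpr (Or.inl (by linarith)))
      rw [indicator_of_notMem hp, hsupp p this]
      simp

lemma sdw_meas_prod (u0 u1 a b ε : ℝ) :
    Measurable (fun p : ℝ × ℝ => sdw u0 u1 a b ε p.2 p.1) := by
  unfold sdw
  refine Measurable.ite (measurableSet_lt measurable_snd (measurable_fst.const_mul ε).neg)
    measurable_const ?_
  refine Measurable.ite (measurableSet_lt measurable_snd measurable_const) measurable_const ?_
  exact Measurable.ite (measurableSet_lt measurable_snd (measurable_fst.const_mul ε))
    measurable_const measurable_const

lemma sdw_meas_x (u0 u1 a b ε t : ℝ) : Measurable (fun x => sdw u0 u1 a b ε x t) :=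
  (sdw_meas_prod u0 u1 a b ε).comp ((measurable_const (a := t)).prodMk measurable_id)

lemma sdw_abs_le (u0 u1 a b ε x t : ℝ) :
    |sdw u0 u1 a b ε x t| ≤ |u0| + |u1| + |a| + |b| := by
  have h0 := abs_nonneg u0; have h1 := abs_nonneg u1
  have h2 := abs_nonneg a; have h3 := abs_nonneg b
  unfold sdw; split_ifs <;> linarith

lemma sdw_eq (u0 u1 ξ0 ξ1 ε : ℝ) (hε : 0 < ε) {t : ℝ} (ht : 0 < t) (x : ℝ) :
    sdw u0 u1 (u0 + ξ0 / ε) (u1 + ξ1 / ε) ε x t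
      = (if x < 0 then u0 else u1) + (Ico (-(ε * t)) 0).indicator (fun _ => ξ0 / ε) x
        + (Ico 0 (ε * t)).indicator (fun _ => ξ1 / ε) x := by
  have hεt : 0 < ε * t := mul_pos hε ht
  unfold sdw
  by_cases h1 : x < -(ε * t)
  · have hx0 : x < 0 := by linarith
    rw [if_pos h1, if_pos hx0, indicator_of_notMem (by simp [mem_Ico]; intro h; linarith),
      indicator_of_notMem (by simp [mem_Ico]; intro h; linarith)]
    ring
  · rw [if_neg h1]
    push_neg at h1
    by_cases h2 : x < 0
    · rw [if_pos h2, if_pos h2, indicator_of_mem (mem_Ico.mpr ⟨h1, h2⟩),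
        indicator_of_notMem (by simp [mem_Ico]; intro h; linarith)]
      ring
    · push_neg at h2
      rw [if_neg (not_lt.mpr h2), if_neg (not_lt.mpr h2)]
      by_cases h3 : x < ε * t
      · rw [if_pos h3, indicator_of_notMem (by simp [mem_Ico]; intro h; linarith),
          indicator_of_mem (mem_Ico.mpr ⟨h2, h3⟩)]
        ring
      · rw [if_neg h3, indicator_of_notMem (by simp [mem_Ico]; intro h; linarith),
          indicator_of_notMem (by simp [mem_Ico]; intro h; linarith)]
        ring

lemma flux_eq (fl fr : ℝ → ℝ) (u0 u1 a b ε : ℝ) (hε : 0 < ε) {t : ℝ} (ht : 0 < t) (x : ℝ) :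
    twoFlux fl fr x (sdw u0 u1 a b ε x t)
      = fr u1 + (Iio (ε * t)).indicator (fun _ => fr b - fr u1) x
        + (Iio (0:ℝ)).indicator (fun _ => fl a - fr b) x
        + (Iio (-(ε * t))).indicator (fun _ => fl u0 - fl a) x := by
  have hεt : 0 < ε * t := mul_pos hε ht
  unfold twoFlux sdw
  by_cases h1 : x < -(ε * t)
  · have hx0 : x < 0 := by linarith
    rw [if_pos h1, if_pos hx0, indicator_of_mem (show x ∈ Iio (ε*t) from by simp [mem_Iio]; linarith),
      indicator_of_mem (show x ∈ Iio (0:ℝ) from hx0), indicator_of_mem (show x ∈ Iio (-(ε*t)) from h1)]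
    ring
  · rw [if_neg h1]
    push_neg at h1
    by_cases h2 : x < 0
    · rw [if_pos h2, if_pos h2, indicator_of_mem (show x ∈ Iio (ε*t) from by simp [mem_Iio]; linarith),
        indicator_of_mem (show x ∈ Iio (0:ℝ) from h2),
        indicator_of_notMem (show x ∉ Iio (-(ε*t)) from by simp [mem_Iio]; linarith)]
      ring
    · push_neg at h2
      rw [if_neg (not_lt.mpr h2), if_neg (not_lt.mpr h2)]
      by_cases h3 : x < ε * t
      · rw [if_pos h3, indicator_of_mem (show x ∈ Iio (ε*t) from h3),
          indicator_of_notMem (show x ∉ Iio (0:ℝ) from by simp [mem_Iio]; linarith),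
          indicator_of_notMem (show x ∉ Iio (-(ε*t)) from by simp [mem_Iio]; linarith)]
        ring
      · rw [if_neg h3, indicator_of_notMem (show x ∉ Iio (ε*t) from by simpa using h3),
          indicator_of_notMem (show x ∉ Iio (0:ℝ) from by simp [mem_Iio]; linarith),
          indicator_of_notMem (show x ∉ Iio (-(ε*t)) from by simp [mem_Iio]; linarith)]
        ring

lemma sdw_left (u0 u1 a b : ℝ) {ε : ℝ} (hε : 0 < ε) {x : ℝ} (hx : x < 0) (t : ℝ) :
    sdw u0 u1 a b ε x t = a + (Iio (-x / ε)).indicator (fun _ => u0 - a) t := by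
  unfold sdw
  by_cases h1 : x < -(ε * t)
  · rw [if_pos h1, indicator_of_mem (show t ∈ Iio (-x/ε) from by rw [mem_Iio, lt_div_iff₀ hε]; linarith)]
    ring
  · push_neg at h1
    rw [if_neg (not_lt.mpr h1), if_pos hx,
      indicator_of_notMem (show t ∉ Iio (-x/ε) from by rw [mem_Iio, not_lt, div_le_iff₀ hε]; linarith)]
    ring

lemma sdw_right (u0 u1 a b : ℝ) {ε : ℝ} (hε : 0 < ε) {x : ℝ} (hx : 0 < x) {t : ℝ} (ht : 0 < t) :
    sdw u0 u1 a b ε x t = b + (Iic (x / ε)).indicator (fun _ => u1 - b) t := by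
  unfold sdw
  rw [if_neg (by push_neg; nlinarith), if_neg (not_lt.mpr hx.le)]
  by_cases h3 : x < ε * t
  · rw [if_pos h3, indicator_of_notMem (show t ∉ Iic (x/ε) from by rw [mem_Iic, not_le, div_lt_iff₀ hε]; linarith)]
    ring
  · push_neg at h3
    rw [if_neg (not_lt.mpr h3), indicator_of_mem (show t ∈ Iic (x/ε) from by rw [mem_Iic, le_div_iff₀ hε]; linarith)]
    ring


lemma ftc_Ioc {g g' : ℝ → ℝ} (hd : ∀ x, HasDerivAt g (g' x) x) (hc : Continuous g')
    {a b : ℝ} (hab : a ≤ b) : ∫ x in Ioc a b, g' x = g b - g a := by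
  rw [← intervalIntegral.integral_of_le hab]
  exact intervalIntegral.integral_eq_sub_of_hasDerivAt (fun x _ => hd x)
    (hc.intervalIntegrable a b)

lemma ftc_Ioo {g g' : ℝ → ℝ} (hd : ∀ x, HasDerivAt g (g' x) x) (hc : Continuous g')
    {a b : ℝ} (hab : a ≤ b) : ∫ x in Ioo a b, g' x = g b - g a := by
  rw [← integral_Ioc_eq_integral_Ioo]; exact ftc_Ioc hd hc hab

lemma hcs_of_vanish {g : ℝ → ℝ} {B : ℝ} (hB : ∀ x, B ≤ |x| → g x = 0) :
    HasCompactSupport g := by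
  apply HasCompactSupport.intro (isCompact_Icc (a := -B) (b := B))
  intro x hx
  apply hB
  by_contra h
  push_neg at h
  obtain ⟨h1, h2⟩ := abs_lt.mp h
  exact hx ⟨by linarith, by linarith⟩

lemma ftc_Iio {g g' : ℝ → ℝ} (hd : ∀ x, HasDerivAt g (g' x) x) (hc : Continuous g')
    {B : ℝ} (hB0 : 0 ≤ B) (hg : ∀ x, B ≤ |x| → g x = 0) (hg' : ∀ x, B ≤ |x| → g' x = 0)
    (a : ℝ) : ∫ x in Iio a, g' x = g a := by
  have hint : Integrable g' := hc.integrable_of_hasCompactSupport (hcs_of_vanish hg')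
  set c := min a (-B - 1) with hc_def
  have hca : c ≤ a := min_le_left _ _
  have hcB : c ≤ -B - 1 := min_le_right _ _
  have habs : ∀ x : ℝ, x ≤ c → B ≤ |x| := by
    intro x hx
    have : x ≤ -B - 1 := hx.trans hcB
    rw [abs_of_nonpos (by linarith)]; linarith
  calc ∫ x in Iio a, g' x = ∫ x in Iic a, g' x := setIntegral_congr_set Iio_ae_eq_Iic
    _ = ∫ x in Iic c ∪ Ioc c a, g' x := by rw [Iic_union_Ioc_eq_Iic hca]
    _ = (∫ x in Iic c, g' x) + ∫ x in Ioc c a, g' x :=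
        setIntegral_union (Iic_disjoint_Ioc le_rfl) measurableSet_Ioc
          hint.integrableOn hint.integrableOn
    _ = 0 + (g a - g c) := by
        have h1 : (∫ x in Iic c, g' x) = 0 :=
          setIntegral_eq_zero_of_forall_eq_zero fun x hx => hg' x (habs x hx)
        rw [h1, ftc_Ioc hd hc hca]
    _ = g a := by rw [hg c (habs c le_rfl)]; ring

lemma ftc_Ioi {g g' : ℝ → ℝ} (hd : ∀ x, HasDerivAt g (g' x) x) (hc : Continuous g')
    {B : ℝ} (hB0 : 0 ≤ B) (hg : ∀ x, B ≤ |x| → g x = 0) (hg' : ∀ x, B ≤ |x| → g' x = 0)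
    (a : ℝ) : ∫ x in Ioi a, g' x = -g a := by
  have hint : Integrable g' := hc.integrable_of_hasCompactSupport (hcs_of_vanish hg')
  set c := max a (B + 1) with hc_def
  have hca : a ≤ c := le_max_left _ _
  have hcB : B + 1 ≤ c := le_max_right _ _
  have habs : ∀ x : ℝ, c ≤ x → B ≤ |x| := by
    intro x hx
    have : B + 1 ≤ x := hcB.trans hx
    rw [abs_of_nonneg (by linarith)]; linarith
  calc ∫ x in Ioi a, g' x = ∫ x in Ioc a c ∪ Ioi c, g' x := by rw [Ioc_union_Ioi_eq_Ioi hca]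
    _ = (∫ x in Ioc a c, g' x) + ∫ x in Ioi c, g' x :=
        setIntegral_union Ioc_disjoint_Ioi_same measurableSet_Ioi
          hint.integrableOn hint.integrableOn
    _ = (g c - g a) + 0 := by
        have h1 : (∫ x in Ioi c, g' x) = 0 :=
          setIntegral_eq_zero_of_forall_eq_zero fun x hx => hg' x (habs x (le_of_lt hx))
        rw [h1, ftc_Ioc hd hc hca]
    _ = -g a := by rw [hg c (habs c le_rfl)]; ring

lemma ftc_univ {g g' : ℝ → ℝ} (hd : ∀ x, HasDerivAt g (g' x) x) (hc : Continuous g')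
    {B : ℝ} (hB0 : 0 ≤ B) (hg : ∀ x, B ≤ |x| → g x = 0) (hg' : ∀ x, B ≤ |x| → g' x = 0) :
    ∫ x, g' x = 0 := by
  have hint : Integrable g' := hc.integrable_of_hasCompactSupport (hcs_of_vanish hg')
  have := intervalIntegral.integral_Iic_add_Ioi (f := g') (b := 0) hint.integrableOn hint.integrableOn
  rw [← this, ← setIntegral_congr_set (Iio_ae_eq_Iic (a := (0:ℝ))),
    ftc_Iio hd hc hB0 hg hg' 0, ftc_Ioi hd hc hB0 hg hg' 0]
  ring


section TestFun
variable {φ : ℝ × ℝ → ℝ}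

lemma cont_Dv (hsm : ContDiff ℝ (⊤ : ℕ∞) φ) (v : ℝ × ℝ) :
    Continuous (fun p : ℝ × ℝ => fderiv ℝ φ p v) :=
  (hsm.continuous_fderiv (by simp)).clm_apply continuous_const

lemma hderiv_x (hsm : ContDiff ℝ (⊤ : ℕ∞) φ) (t x : ℝ) :
    HasDerivAt (fun y => φ (y, t)) (fderiv ℝ φ (x, t) ((1:ℝ), (0:ℝ))) x := by
  have h1 : HasFDerivAt φ (fderiv ℝ φ (x, t)) (x, t) :=
    (hsm.differentiable (by simp) (x, t)).hasFDerivAt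
  have h2 : HasDerivAt (fun y : ℝ => (y, t)) ((1:ℝ), (0:ℝ)) x :=
    (hasDerivAt_id x).prodMk (hasDerivAt_const x t)
  exact h1.comp_hasDerivAt x h2

lemma hderiv_t (hsm : ContDiff ℝ (⊤ : ℕ∞) φ) (x t : ℝ) :
    HasDerivAt (fun s => φ (x, s)) (fderiv ℝ φ (x, t) ((0:ℝ), (1:ℝ))) t := by
  have h1 : HasFDerivAt φ (fderiv ℝ φ (x, t)) (x, t) :=
    (hsm.differentiable (by simp) (x, t)).hasFDerivAt
  have h2 : HasDerivAt (fun s : ℝ => (x, s)) ((0:ℝ), (1:ℝ)) t :=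
    (hasDerivAt_const t x).prodMk (hasDerivAt_id t)
  exact h1.comp_hasDerivAt t h2

lemma exists_R (hcs : HasCompactSupport φ) :
    ∃ R : ℝ, 1 ≤ R ∧ ∀ p : ℝ × ℝ, R ≤ ‖p‖ → φ p = 0 ∧ fderiv ℝ φ p = 0 := by
  obtain ⟨r, hr⟩ := hcs.isBounded.subset_closedBall 0
  refine ⟨max r 0 + 1, by simp, fun p hp => ?_⟩
  have hout : p ∉ tsupport φ := by
    intro hmem
    have := hr hmem
    simp only [Metric.mem_closedBall, dist_zero_right] at this
    have : ‖p‖ ≤ max r 0 := this.trans (le_max_left _ _)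
    linarith
  exact ⟨image_eq_zero_of_notMem_tsupport hout,
    image_eq_zero_of_notMem_tsupport (fun h => hout (tsupport_fderiv_subset ℝ h))⟩

lemma lip_exists (hsm : ContDiff ℝ (⊤ : ℕ∞) φ) (hcs : HasCompactSupport φ) :
    ∃ L : ℝ, 0 ≤ L ∧ ∀ p q : ℝ × ℝ, |φ p - φ q| ≤ L * ‖p - q‖ := by
  obtain ⟨C, hC⟩ := hsm.lipschitzWith_of_hasCompactSupport hcs (by simp)
  refine ⟨C, C.coe_nonneg, fun p q => ?_⟩
  have := hC.dist_le_mul p q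
  rwa [Real.dist_eq, dist_eq_norm] at this

lemma lip2_exists (hsm : ContDiff ℝ (⊤ : ℕ∞) φ) (hcs : HasCompactSupport φ) :
    ∃ L : ℝ, 0 ≤ L ∧ ∀ p q : ℝ × ℝ, ‖fderiv ℝ φ p - fderiv ℝ φ q‖ ≤ L * ‖p - q‖ := by
  have hsm' : ContDiff ℝ (⊤ : ℕ∞) (fderiv ℝ φ) := hsm.fderiv_right (by simp)
  obtain ⟨C, hC⟩ := hsm'.lipschitzWith_of_hasCompactSupport (hcs.fderiv ℝ) (by simp)
  refine ⟨C, C.coe_nonneg, fun p q => ?_⟩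
  have := hC.dist_le_mul p q
  rwa [dist_eq_norm, dist_eq_norm] at this

/-- second difference bound -/
lemma secdiff (hsm : ContDiff ℝ (⊤ : ℕ∞) φ) {L2 : ℝ} (hL2' : 0 ≤ L2)
    (hL2 : ∀ p q : ℝ × ℝ, ‖fderiv ℝ φ p - fderiv ℝ φ q‖ ≤ L2 * ‖p - q‖)
    (t : ℝ) {h : ℝ} (hh : 0 ≤ h) :
    |φ (h, t) + φ (-h, t) - 2 * φ (0, t)| ≤ 2 * L2 * h ^ 2 := by
  set D0 : ℝ := fderiv ℝ φ ((0:ℝ), t) (1, 0) with hD0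
  set ψ : ℝ → ℝ := fun y => φ (y, t) - y * D0 with hψ
  have hd : ∀ y : ℝ, HasDerivAt ψ (fderiv ℝ φ (y, t) (1, 0) - D0) y := fun y =>
    (hderiv_x hsm t y).sub ((hasDerivAt_id y).mul_const D0 |>.congr_deriv (by ring))
  have hbound : ∀ y ∈ Icc (-h) h, ‖fderiv ℝ φ (y, t) (1, 0) - D0‖ ≤ L2 * h := by
    intro y hy
    have h1 : ‖fderiv ℝ φ (y, t) (1, 0) - D0‖
        ≤ ‖fderiv ℝ φ (y, t) - fderiv ℝ φ ((0:ℝ), t)‖ * ‖((1:ℝ), (0:ℝ))‖ := by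
      rw [hD0]
      exact (fderiv ℝ φ (y, t) - fderiv ℝ φ ((0:ℝ), t)).le_opNorm _
    have h2 : ‖((1:ℝ), (0:ℝ))‖ = 1 := by
      simp [Prod.norm_def]
    have h3 : ‖fderiv ℝ φ (y, t) - fderiv ℝ φ ((0:ℝ), t)‖ ≤ L2 * |y| := by
      have := hL2 (y, t) ((0:ℝ), t)
      simpa [Prod.norm_def, Prod.sub_def, Real.norm_eq_abs] using this
    have h4 : |y| ≤ h := abs_le.mpr ⟨hy.1, hy.2⟩
    calc ‖fderiv ℝ φ (y, t) (1, 0) - D0‖ ≤ L2 * |y| * 1 := by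
          rw [h2] at h1; simpa using h1.trans (by nlinarith)
      _ ≤ L2 * h := by nlinarith
  have hmvt : ∀ y ∈ Icc (-h) h, |ψ y - ψ 0| ≤ (L2 * h) * |y| := by
    intro y hy
    have := (convex_Icc (-h) h).norm_image_sub_le_of_norm_hasDerivWithin_le
      (fun z hz => (hd z).hasDerivWithinAt) hbound
      (show (0:ℝ) ∈ Icc (-h) h by constructor <;> linarith)
      hy
    simpa [Real.norm_eq_abs] using this
  have e1 := hmvt h ⟨by linarith, le_rfl⟩
  have e2 := hmvt (-h) ⟨le_rfl, by linarith⟩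
  have hs : ψ h - ψ 0 + (ψ (-h) - ψ 0) = φ (h, t) + φ (-h, t) - 2 * φ (0, t) := by
    simp only [hψ]; ring
  have habs : |φ (h, t) + φ (-h, t) - 2 * φ (0, t)| ≤ |ψ h - ψ 0| + |ψ (-h) - ψ 0| := by
    rw [← hs]; exact abs_add_le _ _
  rw [abs_of_nonneg hh] at e1
  rw [abs_neg, abs_of_nonneg hh] at e2
  nlinarith

end TestFun

section Part2

lemma part2_aux {φ : ℝ × ℝ → ℝ} (hsm : ContDiff ℝ (⊤ : ℕ∞) φ) (hcs : HasCompactSupport φ)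
    (u0 u1 ξ0 ξ1 : ℝ) :
    Tendsto (fun ε : ℝ =>
        ∫ t in Ioi (0:ℝ), ∫ x : ℝ, sdw u0 u1 (u0 + ξ0 / ε) (u1 + ξ1 / ε) ε x t * φ (x, t))
      (𝓝[>] (0:ℝ))
      (𝓝 ((∫ t in Ioi (0:ℝ), ∫ x : ℝ, (if x < 0 then u0 else u1) * φ (x, t)) +
           (ξ0 + ξ1) * ∫ t in Ioi (0:ℝ), t * φ (0, t))) := by
  obtain ⟨R, hR1, hR⟩ := exists_R hcs
  have hR0 : (0:ℝ) < R := by linarith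
  obtain ⟨L, hL0, hL⟩ := lip_exists hsm hcs
  obtain ⟨Mφ, hMφ⟩ := hcs.exists_bound_of_continuous hsm.continuous
  have hMφ0 : 0 ≤ Mφ := le_trans (norm_nonneg _) (hMφ 0)
  have hMφ' : ∀ p : ℝ × ℝ, |φ p| ≤ Mφ := fun p => (Real.norm_eq_abs _) ▸ hMφ p
  have hφz : ∀ x t : ℝ, R ≤ |t| → φ (x, t) = 0 := by
    intro x t h
    refine (hR (x, t) (le_trans h ?_)).1
    simpa [Real.norm_eq_abs] using norm_snd_le ((x, t) : ℝ × ℝ)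
  have hφzx : ∀ x t : ℝ, R ≤ |x| → φ (x, t) = 0 := by
    intro x t h
    refine (hR (x, t) (le_trans h ?_)).1
    simpa [Real.norm_eq_abs] using norm_fst_le ((x, t) : ℝ × ℝ)
  set C : ℝ := (|ξ0| + |ξ1|) * L * R ^ 2 * R with hC
  have key : ∀ ε : ℝ, ε ∈ Ioi (0:ℝ) →
      ‖(∫ t in Ioi (0:ℝ), ∫ x : ℝ, sdw u0 u1 (u0 + ξ0 / ε) (u1 + ξ1 / ε) ε x t * φ (x, t)) -
        ((∫ t in Ioi (0:ℝ), ∫ x : ℝ, (if x < 0 then u0 else u1) * φ (x, t)) +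
           (ξ0 + ξ1) * ∫ t in Ioi (0:ℝ), t * φ (0, t))‖ ≤ C * ε := by
    intro ε hε
    rw [mem_Ioi] at hε
    set a : ℝ := u0 + ξ0 / ε with ha
    set b : ℝ := u1 + ξ1 / ε with hb
    -- integrability of relevant 2D functions
    have hsdwφmeas : AEStronglyMeasurable (fun p : ℝ × ℝ => sdw u0 u1 a b ε p.2 p.1 * φ (p.2, p.1))
        ((volume.restrict (Ioi (0:ℝ))).prod volume) :=
      (((sdw_meas_prod u0 u1 a b ε).mul
        ((hsm.continuous.comp (continuous_snd.prodMk continuous_fst)).measurable))).aestronglyMeasurable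
    have hFfull : Integrable (fun p : ℝ × ℝ => sdw u0 u1 a b ε p.2 p.1 * φ (p.2, p.1))
        ((volume.restrict (Ioi (0:ℝ))).prod volume) := by
      refine integrable_prod_of_bound_supp hsdwφmeas ((|u0| + |u1| + |a| + |b|) * Mφ) R ?_ ?_
      · intro p hp
        have : R ≤ ‖((p.2, p.1) : ℝ × ℝ)‖ := by
          rw [Prod.norm_def]
          simpa [Real.norm_eq_abs, max_comm] using hp
        rw [(hR _ this).1, mul_zero]
      · intro p
        rw [abs_mul]
        exact mul_le_mul (sdw_abs_le _ _ _ _ _ _ _) (hMφ' _) (abs_nonneg _)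
          (by positivity)
    have hUmeas : Measurable (fun x : ℝ => if x < 0 then u0 else u1) :=
      Measurable.ite (measurableSet_lt measurable_id measurable_const) measurable_const
        measurable_const
    have hFU : Integrable (fun p : ℝ × ℝ => (if p.2 < 0 then u0 else u1) * φ (p.2, p.1))
        ((volume.restrict (Ioi (0:ℝ))).prod volume) := by
      refine integrable_prod_of_bound_supp
        (((hUmeas.comp measurable_snd).mul
          ((hsm.continuous.comp (continuous_snd.prodMk continuous_fst)).measurable)).aestronglyMeasurable)
        ((|u0| + |u1|) * Mφ) R ?_ ?_
      · intro p hp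
        have : R ≤ ‖((p.2, p.1) : ℝ × ℝ)‖ := by
          rw [Prod.norm_def]
          simpa [Real.norm_eq_abs, max_comm] using hp
        rw [(hR _ this).1, mul_zero]
      · intro p
        rw [abs_mul]
        refine mul_le_mul ?_ (hMφ' _) (abs_nonneg _) (by positivity)
        have h0 := abs_nonneg u0; have h1 := abs_nonneg u1
        split_ifs <;> [linarith [le_abs_self u0, neg_abs_le u0]; linarith [le_abs_self u1]]
    have hIfull : Integrable (fun t : ℝ => ∫ x : ℝ, sdw u0 u1 a b ε x t * φ (x, t))
        (volume.restrict (Ioi (0:ℝ))) := hFfull.integral_prod_left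
    have hIU : Integrable (fun t : ℝ => ∫ x : ℝ, (if x < 0 then u0 else u1) * φ (x, t))
        (volume.restrict (Ioi (0:ℝ))) := hFU.integral_prod_left
    have hIδ : Integrable (fun t : ℝ => (ξ0 + ξ1) * (t * φ (0, t)))
        (volume.restrict (Ioi (0:ℝ))) := by
      refine Integrable.integrableOn (integrable_of_bound_supp ?_ ((|ξ0| + |ξ1|) * (R * Mφ)) R ?_ ?_)
      · exact (continuous_const.mul (continuous_id.mul
          (hsm.continuous.comp (continuous_const.prodMk continuous_id)))).aestronglyMeasurable
      · intro t ht; rw [hφz 0 t ht]; ring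
      · intro t
        by_cases ht : R ≤ |t|
        · rw [hφz 0 t ht]; simp; positivity
        · push_neg at ht
          rw [abs_mul, abs_mul]
          refine mul_le_mul (abs_add_le _ _) ?_ (by positivity) (by positivity)
          exact mul_le_mul ht.le (hMφ' _) (abs_nonneg _) (by linarith)
    -- pointwise facts about E t
    have hEbound : ∀ t : ℝ, 0 < t →
        |(∫ x : ℝ, sdw u0 u1 a b ε x t * φ (x, t)) -
          (∫ x : ℝ, (if x < 0 then u0 else u1) * φ (x, t)) - (ξ0 + ξ1) * (t * φ (0, t))|
          ≤ (|ξ0| + |ξ1|) * L * ε * t ^ 2 := by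
      intro t ht
      have hεt : 0 < ε * t := mul_pos hε ht
      have hφtcont : Continuous (fun x : ℝ => φ (x, t)) :=
        hsm.continuous.comp (continuous_id.prodMk continuous_const)
      have hφtint : Integrable (fun x : ℝ => φ (x, t)) :=
        hφtcont.integrable_of_hasCompactSupport (hcs_of_vanish (fun x hx => hφzx x t hx))
      have hg1 : Integrable (fun x : ℝ => (if x < 0 then u0 else u1) * φ (x, t)) := by
        refine integrable_of_bound_supp ((hUmeas.mul hφtcont.measurable).aestronglyMeasurable)
          ((|u0| + |u1|) * Mφ) R (fun x hx => by rw [hφzx x t hx, mul_zero]) ?_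
        intro x
        rw [abs_mul]
        refine mul_le_mul ?_ (hMφ' _) (abs_nonneg _) (by positivity)
        have h0 := abs_nonneg u0; have h1 := abs_nonneg u1
        split_ifs <;> [linarith [le_abs_self u0, neg_abs_le u0]; linarith [le_abs_self u1]]
      have hg2 : Integrable ((Ico (-(ε * t)) (0:ℝ)).indicator (fun x : ℝ => (ξ0 / ε) * φ (x, t))) :=
        (hφtint.const_mul _).indicator measurableSet_Ico
      have hg3 : Integrable ((Ico (0:ℝ) (ε * t)).indicator (fun x : ℝ => (ξ1 / ε) * φ (x, t))) :=
        (hφtint.const_mul _).indicator measurableSet_Ico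
      have hsplit : (∫ x : ℝ, sdw u0 u1 a b ε x t * φ (x, t)) =
          (∫ x : ℝ, (if x < 0 then u0 else u1) * φ (x, t)) +
          (ξ0 / ε) * (∫ x in Ico (-(ε * t)) (0:ℝ), φ (x, t)) +
          (ξ1 / ε) * (∫ x in Ico (0:ℝ) (ε * t), φ (x, t)) := by
        have heq : (fun x : ℝ => sdw u0 u1 a b ε x t * φ (x, t)) =
            fun x : ℝ => ((if x < 0 then u0 else u1) * φ (x, t) +
              ((Ico (-(ε * t)) (0:ℝ)).indicator (fun x : ℝ => (ξ0 / ε) * φ (x, t)) x +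
               (Ico (0:ℝ) (ε * t)).indicator (fun x : ℝ => (ξ1 / ε) * φ (x, t)) x)) := by
          funext x
          rw [ha, hb, sdw_eq u0 u1 ξ0 ξ1 ε hε ht x]
          by_cases h1 : x ∈ Ico (-(ε * t)) (0:ℝ) <;>
            by_cases h2 : x ∈ Ico (0:ℝ) (ε * t) <;>
            simp only [indicator_apply, h1, h2, if_pos, if_neg, if_true, if_false] <;> ring
        have hg23 : Integrable (fun x : ℝ =>
            (Ico (-(ε * t)) (0:ℝ)).indicator (fun x : ℝ => (ξ0 / ε) * φ (x, t)) x +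
            (Ico (0:ℝ) (ε * t)).indicator (fun x : ℝ => (ξ1 / ε) * φ (x, t)) x) volume :=
          hg2.add hg3
        rw [heq, integral_add hg1 hg23, integral_add hg2 hg3,
          integral_indicator measurableSet_Ico, integral_indicator measurableSet_Ico,
          integral_const_mul, integral_const_mul]
        ring
      have hWbound : ∀ c d : ℝ, c ≤ d → (∀ x ∈ Ico c d, |x| ≤ ε * t) →
          |(∫ x in Ico c d, φ (x, t)) - (d - c) * φ (0, t)| ≤ L * (ε * t) * (d - c) := by
        intro c d hcd hin
        have hvol : volume (Ico c d) = ENNReal.ofReal (d - c) := Real.volume_Ico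
        have hconst : (∫ _ in Ico c d, φ ((0:ℝ), t)) = (d - c) * φ (0, t) := by
          rw [setIntegral_const, measureReal_def, hvol, ENNReal.toReal_ofReal (by linarith), smul_eq_mul]
        have hdiff : (∫ x in Ico c d, φ (x, t)) - (d - c) * φ (0, t) =
            ∫ x in Ico c d, (φ (x, t) - φ ((0:ℝ), t)) := by
          rw [integral_sub hφtint.integrableOn
            (integrableOn_const (ne_of_lt (by rw [hvol]; exact ENNReal.ofReal_lt_top))), hconst]
        rw [hdiff]
        have := norm_setIntegral_le_of_norm_le_const (μ := volume) (s := Ico c d)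
          (f := fun x => φ (x, t) - φ ((0:ℝ), t)) (C := L * (ε * t))
          (by rw [hvol]; exact ENNReal.ofReal_lt_top) ?_
        · rw [Real.norm_eq_abs] at this
          refine le_trans this ?_
          rw [measureReal_def, hvol, ENNReal.toReal_ofReal (by linarith)]
        · intro x hx
          rw [Real.norm_eq_abs]
          have hnorm : ‖((x, t) : ℝ × ℝ) - ((0:ℝ), t)‖ = |x| := by
            rw [Prod.norm_def]
            simp [Real.norm_eq_abs, Prod.sub_def, max_eq_left (abs_nonneg x)]
          calc |φ (x, t) - φ ((0:ℝ), t)| ≤ L * ‖((x, t) : ℝ × ℝ) - ((0:ℝ), t)‖ := hL _ _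
            _ = L * |x| := by rw [hnorm]
            _ ≤ L * (ε * t) := by nlinarith [hin x hx]
      have hb0 : |(∫ x in Ico (-(ε * t)) (0:ℝ), φ (x, t)) - (ε * t) * φ (0, t)|
          ≤ L * (ε * t) * (ε * t) := by
        have := hWbound (-(ε * t)) 0 (by linarith) (fun x hx => by
          rcases hx with ⟨h1, h2⟩; rw [abs_of_nonpos h2.le]; linarith)
        simpa using this
      have hb1 : |(∫ x in Ico (0:ℝ) (ε * t), φ (x, t)) - (ε * t) * φ (0, t)|
          ≤ L * (ε * t) * (ε * t) := by
        have := hWbound 0 (ε * t) (by linarith) (fun x hx => by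
          rcases hx with ⟨h1, h2⟩; rw [abs_of_nonneg h1]; linarith)
        simpa using this
      rw [hsplit]
      have hre : (∫ x : ℝ, (if x < 0 then u0 else u1) * φ (x, t)) +
          (ξ0 / ε) * (∫ x in Ico (-(ε * t)) (0:ℝ), φ (x, t)) +
          (ξ1 / ε) * (∫ x in Ico (0:ℝ) (ε * t), φ (x, t)) -
          (∫ x : ℝ, (if x < 0 then u0 else u1) * φ (x, t)) - (ξ0 + ξ1) * (t * φ (0, t)) =
          (ξ0 / ε) * ((∫ x in Ico (-(ε * t)) (0:ℝ), φ (x, t)) - (ε * t) * φ (0, t)) +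
          (ξ1 / ε) * ((∫ x in Ico (0:ℝ) (ε * t), φ (x, t)) - (ε * t) * φ (0, t)) := by
        field_simp
        ring
      rw [hre]
      have habs : ∀ ξ W : ℝ, |W - (ε * t) * φ (0, t)| ≤ L * (ε * t) * (ε * t) →
          |(ξ / ε) * (W - (ε * t) * φ (0, t))| ≤ |ξ| * (L * ε * t ^ 2) := by
        intro ξ W hW
        rw [abs_mul, abs_div, abs_of_pos hε]
        calc |ξ| / ε * |W - ε * t * φ (0, t)| ≤ |ξ| / ε * (L * (ε * t) * (ε * t)) := by
              apply mul_le_mul_of_nonneg_left hW (by positivity)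
          _ = |ξ| * (L * ε * t ^ 2) := by field_simp
      calc |(ξ0 / ε) * ((∫ x in Ico (-(ε * t)) (0:ℝ), φ (x, t)) - (ε * t) * φ (0, t)) +
          (ξ1 / ε) * ((∫ x in Ico (0:ℝ) (ε * t), φ (x, t)) - (ε * t) * φ (0, t))|
          ≤ |ξ0| * (L * ε * t ^ 2) + |ξ1| * (L * ε * t ^ 2) :=
            le_trans (abs_add_le _ _) (add_le_add (habs _ _ hb0) (habs _ _ hb1))
        _ = (|ξ0| + |ξ1|) * L * ε * t ^ 2 := by ring
    have hEzero : ∀ t : ℝ, R ≤ t →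
        (∫ x : ℝ, sdw u0 u1 a b ε x t * φ (x, t)) -
          (∫ x : ℝ, (if x < 0 then u0 else u1) * φ (x, t)) - (ξ0 + ξ1) * (t * φ (0, t)) = 0 := by
      intro t htR
      have htabs : R ≤ |t| := le_trans htR (le_abs_self t)
      have h1 : (fun x : ℝ => sdw u0 u1 a b ε x t * φ (x, t)) = fun _ => (0:ℝ) := by
        funext x; rw [hφz x t htabs, mul_zero]
      have h2 : (fun x : ℝ => (if x < 0 then u0 else u1) * φ (x, t)) = fun _ => (0:ℝ) := by
        funext x; rw [hφz x t htabs, mul_zero]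
      rw [h1, h2, hφz 0 t htabs]
      simp
    -- assemble
    have hEint : Integrable (fun t : ℝ =>
        (∫ x : ℝ, sdw u0 u1 a b ε x t * φ (x, t)) -
          (∫ x : ℝ, (if x < 0 then u0 else u1) * φ (x, t)) - (ξ0 + ξ1) * (t * φ (0, t)))
        (volume.restrict (Ioi (0:ℝ))) := (hIfull.sub hIU).sub hIδ
    have htotal : (∫ t in Ioi (0:ℝ), ∫ x : ℝ, sdw u0 u1 (u0 + ξ0 / ε) (u1 + ξ1 / ε) ε x t * φ (x, t)) -
        ((∫ t in Ioi (0:ℝ), ∫ x : ℝ, (if x < 0 then u0 else u1) * φ (x, t)) +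
           (ξ0 + ξ1) * ∫ t in Ioi (0:ℝ), t * φ (0, t)) =
        ∫ t in Ioi (0:ℝ),
          ((∫ x : ℝ, sdw u0 u1 a b ε x t * φ (x, t)) -
            (∫ x : ℝ, (if x < 0 then u0 else u1) * φ (x, t)) - (ξ0 + ξ1) * (t * φ (0, t))) := by
      have hIfs : Integrable (fun t : ℝ => (∫ x : ℝ, sdw u0 u1 a b ε x t * φ (x, t)) -
          (∫ x : ℝ, (if x < 0 then u0 else u1) * φ (x, t))) (volume.restrict (Ioi (0:ℝ))) :=
        hIfull.sub hIU
      rw [integral_sub hIfs hIδ, integral_sub hIfull hIU, integral_const_mul, ← ha, ← hb]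
      ring
    rw [htotal]
    have hsplitR : (∫ t in Ioi (0:ℝ),
          ((∫ x : ℝ, sdw u0 u1 a b ε x t * φ (x, t)) -
            (∫ x : ℝ, (if x < 0 then u0 else u1) * φ (x, t)) - (ξ0 + ξ1) * (t * φ (0, t)))) =
        ∫ t in Ioc (0:ℝ) R,
          ((∫ x : ℝ, sdw u0 u1 a b ε x t * φ (x, t)) -
            (∫ x : ℝ, (if x < 0 then u0 else u1) * φ (x, t)) - (ξ0 + ξ1) * (t * φ (0, t))) := by
      have hz : (∫ t in Ioi R,
          ((∫ x : ℝ, sdw u0 u1 a b ε x t * φ (x, t)) -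
            (∫ x : ℝ, (if x < 0 then u0 else u1) * φ (x, t)) - (ξ0 + ξ1) * (t * φ (0, t)))) = 0 :=
        setIntegral_eq_zero_of_forall_eq_zero (fun t ht => hEzero t (le_of_lt ht))
      rw [← Ioc_union_Ioi_eq_Ioi hR0.le,
        setIntegral_union Ioc_disjoint_Ioi_same measurableSet_Ioi
          (hEint.mono_measure (Measure.restrict_mono Ioc_subset_Ioi_self le_rfl))
          (hEint.mono_measure (Measure.restrict_mono (Ioi_subset_Ioi hR0.le) le_rfl)),
        hz, add_zero]
    rw [hsplitR]
    have hnorm := norm_setIntegral_le_of_norm_le_const (μ := volume) (s := Ioc (0:ℝ) R)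
      (f := fun t => (∫ x : ℝ, sdw u0 u1 a b ε x t * φ (x, t)) -
            (∫ x : ℝ, (if x < 0 then u0 else u1) * φ (x, t)) - (ξ0 + ξ1) * (t * φ (0, t)))
      (C := (|ξ0| + |ξ1|) * L * ε * R ^ 2)
      (by rw [Real.volume_Ioc]; exact ENNReal.ofReal_lt_top) ?_
    · refine le_trans hnorm ?_
      rw [measureReal_def, Real.volume_Ioc, ENNReal.toReal_ofReal (by linarith)]
      rw [hC]
      ring_nf
      nlinarith [sq_nonneg R, abs_nonneg ξ0, abs_nonneg ξ1]
    · intro t ht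
      rw [Real.norm_eq_abs]
      refine le_trans (hEbound t ht.1) ?_
      have ht2 : t ^ 2 ≤ R ^ 2 := by nlinarith [ht.1, ht.2]
      exact mul_le_mul_of_nonneg_left ht2 (by positivity)
  rw [← tendsto_sub_nhds_zero_iff]
  apply squeeze_zero_norm' (eventually_nhdsWithin_of_forall key)
  have hlin : Tendsto (fun ε : ℝ => C * ε) (𝓝 (0:ℝ)) (𝓝 (C * 0)) :=
    (continuous_const.mul continuous_id).tendsto 0
  rw [mul_zero] at hlin
  exact hlin.mono_left nhdsWithin_le_nhds

end Part2

section Part1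

lemma Galg (pl ql pr qr u0 u1 ξ0 ξ1 ε φ0 φ1 φ2 : ℝ) (hε : ε ≠ 0)
    (hκsum : pl*u0 - pr*u1 + ql - qr = ξ0 + ξ1) (hm : pr*ξ1 = -(pl*ξ0)) :
    (u0-(u0+ξ0/ε))*(ε*φ1) + (u1-(u1+ξ1/ε))*(ε*φ2)
    + ((pr*(u1+ξ1/ε)+qr - (pr*u1+qr))*φ2 + (pl*(u0+ξ0/ε)+ql - (pr*(u1+ξ1/ε)+qr))*φ0
    + (pl*u0+ql - (pl*(u0+ξ0/ε)+ql))*φ1)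
    = ξ0*(φ0 - φ1) + ξ1*(φ0 - φ2) + (pl*ξ0/ε)*(2*φ0 - φ1 - φ2) := by
  have h1 : ε * ε⁻¹ = 1 := mul_inv_cancel₀ hε
  linear_combination φ0 * hκsum + ((φ2 - φ0)/ε) * hm - (ξ0*φ1 + ξ1*φ2) * h1

set_option maxHeartbeats 2000000 in
lemma part1_aux {φ : ℝ × ℝ → ℝ} (hsm : ContDiff ℝ (⊤ : ℕ∞) φ) (hcs : HasCompactSupport φ)
    (h0 : ∀ p : ℝ × ℝ, p.2 ≤ 0 → φ p = 0)
    (pl ql pr qr u0 u1 ξ0 ξ1 : ℝ)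
    (hκsum : pl*u0 - pr*u1 + ql - qr = ξ0 + ξ1) (hm : pr*ξ1 = -(pl*ξ0))
    (hξ0 : 0 ≤ ξ0) (hξ1 : 0 ≤ ξ1) (hm0 : 0 ≤ pl * ξ0) :
    Tendsto (fun ε : ℝ =>
        ∫ t in Ioi (0:ℝ), ∫ x : ℝ,
          (sdw u0 u1 (u0 + ξ0 / ε) (u1 + ξ1 / ε) ε x t * fderiv ℝ φ (x, t) (0, 1) +
           twoFlux (fun u : ℝ => pl * u + ql) (fun u : ℝ => pr * u + qr) x
             (sdw u0 u1 (u0 + ξ0 / ε) (u1 + ξ1 / ε) ε x t) * fderiv ℝ φ (x, t) (1, 0)))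
      (𝓝[>] (0:ℝ)) (𝓝 0) := by
  set fl : ℝ → ℝ := fun u => pl * u + ql with hfl
  set fr : ℝ → ℝ := fun u => pr * u + qr with hfr
  obtain ⟨R, hR1, hR⟩ := exists_R hcs
  have hR0 : (0:ℝ) < R := by linarith
  obtain ⟨L, hL0, hL⟩ := lip_exists hsm hcs
  obtain ⟨L2, hL20, hL2⟩ := lip2_exists hsm hcs
  obtain ⟨MD, hMD⟩ := (hcs.fderiv (𝕜 := ℝ)).exists_bound_of_continuous
    (hsm.continuous_fderiv (by simp))
  have hMD0 : 0 ≤ MD := le_trans (norm_nonneg _) (hMD 0)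
  have hφz : ∀ x t : ℝ, R ≤ |t| → φ (x, t) = 0 := by
    intro x t h
    refine (hR (x, t) (le_trans h ?_)).1
    simpa [Real.norm_eq_abs] using norm_snd_le ((x, t) : ℝ × ℝ)
  have hφzx : ∀ x t : ℝ, R ≤ |x| → φ (x, t) = 0 := by
    intro x t h
    refine (hR (x, t) (le_trans h ?_)).1
    simpa [Real.norm_eq_abs] using norm_fst_le ((x, t) : ℝ × ℝ)
  have hDbound : ∀ (p : ℝ × ℝ) (v : ℝ × ℝ), ‖v‖ ≤ 1 → |fderiv ℝ φ p v| ≤ MD := by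
    intro p v hv
    calc |fderiv ℝ φ p v| ≤ ‖fderiv ℝ φ p‖ * ‖v‖ := (fderiv ℝ φ p).le_opNorm v
      _ ≤ MD * 1 := mul_le_mul (hMD p) hv (norm_nonneg v) hMD0
      _ = MD := mul_one MD
  have hv01 : ‖((0:ℝ), (1:ℝ))‖ ≤ 1 := by simp [Prod.norm_def]
  have hv10 : ‖((1:ℝ), (0:ℝ))‖ ≤ 1 := by simp [Prod.norm_def]
  have hDz : ∀ (x t : ℝ) (v : ℝ × ℝ), R ≤ ‖((x,t) : ℝ × ℝ)‖ → fderiv ℝ φ (x, t) v = 0 := by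
    intro x t v h
    rw [(hR (x, t) h).2]
    rfl
  have hDzx : ∀ x t : ℝ, R ≤ |x| → ∀ v : ℝ × ℝ, fderiv ℝ φ (x, t) v = 0 := by
    intro x t h v
    refine hDz x t v (le_trans h ?_)
    simpa [Real.norm_eq_abs] using norm_fst_le ((x, t) : ℝ × ℝ)
  have hDzt : ∀ x t : ℝ, R ≤ |t| → ∀ v : ℝ × ℝ, fderiv ℝ φ (x, t) v = 0 := by
    intro x t h v
    refine hDz x t v (le_trans h ?_)
    simpa [Real.norm_eq_abs] using norm_snd_le ((x, t) : ℝ × ℝ)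
  set C : ℝ := ((ξ0 + ξ1) * (L * R) + 2 * (pl * ξ0) * L2 * R ^ 2) * R with hC
  have key : ∀ ε : ℝ, ε ∈ Ioi (0:ℝ) →
      ‖(∫ t in Ioi (0:ℝ), ∫ x : ℝ,
          (sdw u0 u1 (u0 + ξ0 / ε) (u1 + ξ1 / ε) ε x t * fderiv ℝ φ (x, t) (0, 1) +
           twoFlux fl fr x (sdw u0 u1 (u0 + ξ0 / ε) (u1 + ξ1 / ε) ε x t) *
             fderiv ℝ φ (x, t) (1, 0))) - 0‖ ≤ C * ε := by
    intro ε hε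
    rw [mem_Ioi] at hε
    set a : ℝ := u0 + ξ0 / ε with ha
    set b : ℝ := u1 + ξ1 / ε with hb
    have hMs : ∀ x t : ℝ, |sdw u0 u1 a b ε x t| ≤ |u0| + |u1| + |a| + |b| :=
      fun x t => sdw_abs_le u0 u1 a b ε x t
    -- Step A : the flux inner integral
    have stepA : ∀ t : ℝ, 0 < t →
        (∫ x : ℝ, twoFlux fl fr x (sdw u0 u1 a b ε x t) * fderiv ℝ φ (x, t) (1, 0)) =
          (fr b - fr u1) * φ (ε * t, t) + (fl a - fr b) * φ (0, t) +
          (fl u0 - fl a) * φ (-(ε * t), t) := by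
      intro t ht
      have hφt0 : ∀ x, R ≤ |x| → φ (x, t) = 0 := fun x hx => hφzx x t hx
      have hDx0 : ∀ x, R ≤ |x| → fderiv ℝ φ (x, t) ((1:ℝ), (0:ℝ)) = 0 :=
        fun x hx => hDzx x t hx _
      have hDxc : Continuous fun x : ℝ => fderiv ℝ φ (x, t) ((1:ℝ), (0:ℝ)) :=
        (cont_Dv hsm _).comp (continuous_id.prodMk continuous_const)
      have hDxint : Integrable fun x : ℝ => fderiv ℝ φ (x, t) ((1:ℝ), (0:ℝ)) :=
        hDxc.integrable_of_hasCompactSupport (hcs_of_vanish hDx0)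
      have heq : (fun x : ℝ => twoFlux fl fr x (sdw u0 u1 a b ε x t) *
            fderiv ℝ φ (x, t) (1, 0)) =
          fun x : ℝ => fr u1 * fderiv ℝ φ (x, t) (1, 0) +
            ((Iio (ε * t)).indicator (fun x : ℝ => (fr b - fr u1) * fderiv ℝ φ (x, t) (1, 0)) x +
             ((Iio (0:ℝ)).indicator (fun x : ℝ => (fl a - fr b) * fderiv ℝ φ (x, t) (1, 0)) x +
              (Iio (-(ε * t))).indicator
                (fun x : ℝ => (fl u0 - fl a) * fderiv ℝ φ (x, t) (1, 0)) x)) := by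
        funext x
        rw [flux_eq fl fr u0 u1 a b ε hε ht x]
        by_cases h1 : x ∈ Iio (ε * t) <;> by_cases h2 : x ∈ Iio (0:ℝ) <;>
          by_cases h3 : x ∈ Iio (-(ε * t)) <;>
          simp only [indicator_apply, h1, h2, h3, if_true, if_false] <;> ring
      have hi0 : Integrable fun x : ℝ => fr u1 * fderiv ℝ φ (x, t) ((1:ℝ), (0:ℝ)) :=
        hDxint.const_mul _
      have hi1 : Integrable ((Iio (ε * t)).indicator
          (fun x : ℝ => (fr b - fr u1) * fderiv ℝ φ (x, t) ((1:ℝ), (0:ℝ)))) :=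
        (hDxint.const_mul _).indicator measurableSet_Iio
      have hi2 : Integrable ((Iio (0:ℝ)).indicator
          (fun x : ℝ => (fl a - fr b) * fderiv ℝ φ (x, t) ((1:ℝ), (0:ℝ)))) :=
        (hDxint.const_mul _).indicator measurableSet_Iio
      have hi3 : Integrable ((Iio (-(ε * t))).indicator
          (fun x : ℝ => (fl u0 - fl a) * fderiv ℝ φ (x, t) ((1:ℝ), (0:ℝ)))) :=
        (hDxint.const_mul _).indicator measurableSet_Iio
      have hi23 : Integrable (fun x : ℝ =>
          (Iio (0:ℝ)).indicator (fun x : ℝ => (fl a - fr b) * fderiv ℝ φ (x, t) (1, 0)) x +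
          (Iio (-(ε * t))).indicator
            (fun x : ℝ => (fl u0 - fl a) * fderiv ℝ φ (x, t) (1, 0)) x) := hi2.add hi3
      have hi123 : Integrable (fun x : ℝ =>
          (Iio (ε * t)).indicator (fun x : ℝ => (fr b - fr u1) * fderiv ℝ φ (x, t) (1, 0)) x +
          ((Iio (0:ℝ)).indicator (fun x : ℝ => (fl a - fr b) * fderiv ℝ φ (x, t) (1, 0)) x +
           (Iio (-(ε * t))).indicator
             (fun x : ℝ => (fl u0 - fl a) * fderiv ℝ φ (x, t) (1, 0)) x)) := hi1.add hi23
      have hB0 : (0:ℝ) ≤ R := hR0.le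
      have hder : ∀ x : ℝ, HasDerivAt (fun y : ℝ => φ (y, t)) (fderiv ℝ φ (x, t) (1, 0)) x :=
        fun x => hderiv_x hsm t x
      rw [heq, integral_add hi0 hi123, integral_add hi1 hi23, integral_add hi2 hi3,
        integral_indicator measurableSet_Iio, integral_indicator measurableSet_Iio,
        integral_indicator measurableSet_Iio,
        integral_const_mul, integral_const_mul, integral_const_mul, integral_const_mul,
        ftc_univ hder hDxc hB0 hφt0 hDx0,
        ftc_Iio hder hDxc hB0 hφt0 hDx0 (ε * t),
        ftc_Iio hder hDxc hB0 hφt0 hDx0 (0:ℝ),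
        ftc_Iio hder hDxc hB0 hφt0 hDx0 (-(ε * t))]
      ring
    -- Step B : inner t-integral for fixed x < 0
    have stepB : ∀ x : ℝ, x < 0 →
        (∫ t in Ioi (0:ℝ), sdw u0 u1 a b ε x t * fderiv ℝ φ (x, t) (0, 1)) =
          (u0 - a) * φ (x, -x / ε) := by
      intro x hx
      have hc : 0 < -x / ε := div_pos (by linarith) hε
      have hDtc : Continuous fun s : ℝ => fderiv ℝ φ (x, s) ((0:ℝ), (1:ℝ)) :=
        (cont_Dv hsm _).comp (continuous_const.prodMk continuous_id)
      have hφt0 : ∀ s, R ≤ |s| → φ (x, s) = 0 := fun s hs => hφz x s hs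
      have hDt0 : ∀ s, R ≤ |s| → fderiv ℝ φ (x, s) ((0:ℝ), (1:ℝ)) = 0 :=
        fun s hs => hDzt x s hs _
      have hDtint : Integrable fun s : ℝ => fderiv ℝ φ (x, s) ((0:ℝ), (1:ℝ)) :=
        hDtc.integrable_of_hasCompactSupport (hcs_of_vanish hDt0)
      have hder : ∀ s : ℝ, HasDerivAt (fun r : ℝ => φ (x, r)) (fderiv ℝ φ (x, s) (0, 1)) s :=
        fun s => hderiv_t hsm x s
      have heq : (fun t : ℝ => sdw u0 u1 a b ε x t * fderiv ℝ φ (x, t) (0, 1)) =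
          fun t : ℝ => a * fderiv ℝ φ (x, t) (0, 1) +
            (Iio (-x / ε)).indicator (fun t : ℝ => (u0 - a) * fderiv ℝ φ (x, t) (0, 1)) t := by
        funext t
        rw [sdw_left u0 u1 a b hε hx t]
        by_cases h1 : t ∈ Iio (-x / ε) <;>
          simp only [indicator_apply, h1, if_true, if_false] <;> ring
      have hind : Integrable ((Iio (-x / ε)).indicator
          (fun t : ℝ => (u0 - a) * fderiv ℝ φ (x, t) ((0:ℝ), (1:ℝ)))) :=
        (hDtint.const_mul _).indicator measurableSet_Iio
      have hIset : Iio (-x / ε) ∩ Ioi (0:ℝ) = Ioo (0:ℝ) (-x / ε) := by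
        rw [inter_comm, Ioi_inter_Iio]
      rw [heq, integral_add ((hDtint.const_mul a).integrableOn) hind.integrableOn,
        integral_const_mul, ftc_Ioi hder hDtc hR0.le hφt0 hDt0 0,
        integral_indicator measurableSet_Iio, Measure.restrict_restrict measurableSet_Iio,
        hIset, integral_const_mul, ftc_Ioo hder hDtc hc.le,
        h0 (x, 0) le_rfl]
      ring
    -- Step B' : inner t-integral for fixed x > 0
    have stepB' : ∀ x : ℝ, 0 < x →
        (∫ t in Ioi (0:ℝ), sdw u0 u1 a b ε x t * fderiv ℝ φ (x, t) (0, 1)) =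
          (u1 - b) * φ (x, x / ε) := by
      intro x hx
      have hc : 0 < x / ε := div_pos hx hε
      have hDtc : Continuous fun s : ℝ => fderiv ℝ φ (x, s) ((0:ℝ), (1:ℝ)) :=
        (cont_Dv hsm _).comp (continuous_const.prodMk continuous_id)
      have hφt0 : ∀ s, R ≤ |s| → φ (x, s) = 0 := fun s hs => hφz x s hs
      have hDt0 : ∀ s, R ≤ |s| → fderiv ℝ φ (x, s) ((0:ℝ), (1:ℝ)) = 0 :=
        fun s hs => hDzt x s hs _
      have hDtint : Integrable fun s : ℝ => fderiv ℝ φ (x, s) ((0:ℝ), (1:ℝ)) :=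
        hDtc.integrable_of_hasCompactSupport (hcs_of_vanish hDt0)
      have hder : ∀ s : ℝ, HasDerivAt (fun r : ℝ => φ (x, r)) (fderiv ℝ φ (x, s) (0, 1)) s :=
        fun s => hderiv_t hsm x s
      have heq : EqOn (fun t : ℝ => sdw u0 u1 a b ε x t * fderiv ℝ φ (x, t) (0, 1))
          (fun t : ℝ => b * fderiv ℝ φ (x, t) (0, 1) +
            (Iic (x / ε)).indicator (fun t : ℝ => (u1 - b) * fderiv ℝ φ (x, t) (0, 1)) t)
          (Ioi (0:ℝ)) := by
        intro t ht
        rw [mem_Ioi] at ht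
        simp only
        rw [sdw_right u0 u1 a b hε hx ht]
        by_cases h1 : t ∈ Iic (x / ε) <;>
          simp only [indicator_apply, h1, if_true, if_false] <;> ring
      have hind : Integrable ((Iic (x / ε)).indicator
          (fun t : ℝ => (u1 - b) * fderiv ℝ φ (x, t) ((0:ℝ), (1:ℝ)))) :=
        (hDtint.const_mul _).indicator measurableSet_Iic
      have hIset : Iic (x / ε) ∩ Ioi (0:ℝ) = Ioc (0:ℝ) (x / ε) := by
        rw [inter_comm, Ioi_inter_Iic]
      rw [setIntegral_congr_fun measurableSet_Ioi heq,
        integral_add ((hDtint.const_mul b).integrableOn) hind.integrableOn,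
        integral_const_mul, ftc_Ioi hder hDtc hR0.le hφt0 hDt0 0,
        integral_indicator measurableSet_Iic, Measure.restrict_restrict measurableSet_Iic,
        hIset, integral_const_mul, ftc_Ioc hder hDtc hc.le,
        h0 (x, 0) le_rfl]
      ring
    -- product integrability of the time part
    have hGprod : Integrable (fun p : ℝ × ℝ =>
        sdw u0 u1 a b ε p.2 p.1 * fderiv ℝ φ (p.2, p.1) (0, 1))
        ((volume.restrict (Ioi (0:ℝ))).prod volume) := by
      refine integrable_prod_of_bound_supp ?_ ((|u0| + |u1| + |a| + |b|) * MD) R ?_ ?_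
      · exact ((sdw_meas_prod u0 u1 a b ε).mul
          (((cont_Dv hsm ((0:ℝ),(1:ℝ))).comp (continuous_snd.prodMk continuous_fst)).measurable)).aestronglyMeasurable
      · intro p hp
        have : R ≤ ‖((p.2, p.1) : ℝ × ℝ)‖ := by
          rw [Prod.norm_def]
          simpa [Real.norm_eq_abs, max_comm] using hp
        rw [hDz p.2 p.1 _ this, mul_zero]
      · intro p
        rw [abs_mul]
        exact mul_le_mul (hMs _ _) (hDbound _ _ hv01) (abs_nonneg _) (by positivity)
    have hItint : Integrable (fun t : ℝ =>
        ∫ x : ℝ, sdw u0 u1 a b ε x t * fderiv ℝ φ (x, t) (0, 1))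
        (volume.restrict (Ioi (0:ℝ))) := hGprod.integral_prod_left
    -- continuous compactly supported integrands in t
    have hphi0int : Integrable (fun t : ℝ => φ (0, t)) :=
      (hsm.continuous.comp (continuous_const.prodMk continuous_id)).integrable_of_hasCompactSupport
        (hcs_of_vanish (fun t h => hφz 0 t h))
    have hphiLint : Integrable (fun t : ℝ => φ (-(ε * t), t)) := by
      refine ((hsm.continuous.comp
        (((continuous_const.mul continuous_id).neg).prodMk continuous_id)).integrable_of_hasCompactSupport
        (hcs_of_vanish (fun t h => hφz _ t h)))
    have hphiRint : Integrable (fun t : ℝ => φ (ε * t, t)) := by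
      refine ((hsm.continuous.comp
        ((continuous_const.mul continuous_id).prodMk continuous_id)).integrable_of_hasCompactSupport
        (hcs_of_vanish (fun t h => hφz _ t h)))
    -- Fubini for the time part
    have hswap : (∫ t in Ioi (0:ℝ), ∫ x : ℝ, sdw u0 u1 a b ε x t * fderiv ℝ φ (x, t) (0, 1)) =
        ∫ x : ℝ, ∫ t in Ioi (0:ℝ), sdw u0 u1 a b ε x t * fderiv ℝ φ (x, t) (0, 1) := by
      exact integral_integral_swap hGprod
    have hinner_int : Integrable (fun x : ℝ =>
        ∫ t in Ioi (0:ℝ), sdw u0 u1 a b ε x t * fderiv ℝ φ (x, t) (0, 1)) volume :=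
      hGprod.integral_prod_right
    -- substitution on the left half-line
    have hsubL : (∫ x in Iic (0:ℝ),
          ∫ t in Ioi (0:ℝ), sdw u0 u1 a b ε x t * fderiv ℝ φ (x, t) (0, 1)) =
        (u0 - a) * (ε * ∫ t in Ioi (0:ℝ), φ (-(ε * t), t)) := by
      have e1 : (∫ x in Iic (0:ℝ),
            ∫ t in Ioi (0:ℝ), sdw u0 u1 a b ε x t * fderiv ℝ φ (x, t) (0, 1)) =
          ∫ x in Iio (0:ℝ), (u0 - a) * φ (x, -x / ε) := by
        rw [← setIntegral_congr_set Iio_ae_eq_Iic]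
        exact setIntegral_congr_fun measurableSet_Iio (fun x hx => stepB x hx)
      have e2 : (∫ x in Iio (0:ℝ), (u0 - a) * φ (x, -x / ε)) =
          (u0 - a) * ∫ x in Iio (0:ℝ), φ (x, -x / ε) := integral_const_mul _ _
      have e3 : (∫ x in Iio (0:ℝ), φ (x, -x / ε)) = ∫ x in Ioi (0:ℝ), φ (-x, x / ε) := by
        have hrefl := integral_comp_neg_Ioi (0:ℝ) (fun y : ℝ => φ (y, -y / ε))
        rw [neg_zero] at hrefl
        rw [setIntegral_congr_set Iio_ae_eq_Iic, ← hrefl]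
        refine setIntegral_congr_fun measurableSet_Ioi (fun x _ => ?_)
        show φ (-x, -(-x) / ε) = φ (-x, x / ε)
        rw [neg_neg]
      have e4 : (∫ x in Ioi (0:ℝ), φ (-x, x / ε)) = ε * ∫ t in Ioi (0:ℝ), φ (-(ε * t), t) := by
        have := integral_comp_mul_left_Ioi (fun s : ℝ => φ (-(ε * s), s)) 0 (inv_pos.mpr hε)
        simp only [mul_zero, inv_inv, smul_eq_mul] at this
        rw [← this]
        refine setIntegral_congr_fun measurableSet_Ioi (fun x _ => ?_)
        rw [← mul_assoc, mul_inv_cancel₀ (ne_of_gt hε), one_mul, inv_mul_eq_div]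
      rw [e1, e2, e3, e4]
    -- substitution on the right half-line
    have hsubR : (∫ x in Ioi (0:ℝ),
          ∫ t in Ioi (0:ℝ), sdw u0 u1 a b ε x t * fderiv ℝ φ (x, t) (0, 1)) =
        (u1 - b) * (ε * ∫ t in Ioi (0:ℝ), φ (ε * t, t)) := by
      have e1 : (∫ x in Ioi (0:ℝ),
            ∫ t in Ioi (0:ℝ), sdw u0 u1 a b ε x t * fderiv ℝ φ (x, t) (0, 1)) =
          ∫ x in Ioi (0:ℝ), (u1 - b) * φ (x, x / ε) :=
        setIntegral_congr_fun measurableSet_Ioi (fun x hx => stepB' x hx)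
      have e2 : (∫ x in Ioi (0:ℝ), (u1 - b) * φ (x, x / ε)) =
          (u1 - b) * ∫ x in Ioi (0:ℝ), φ (x, x / ε) := integral_const_mul _ _
      have e4 : (∫ x in Ioi (0:ℝ), φ (x, x / ε)) = ε * ∫ t in Ioi (0:ℝ), φ (ε * t, t) := by
        have := integral_comp_mul_left_Ioi (fun s : ℝ => φ (ε * s, s)) 0 (inv_pos.mpr hε)
        simp only [mul_zero, inv_inv, smul_eq_mul] at this
        rw [← this]
        refine setIntegral_congr_fun measurableSet_Ioi (fun x _ => ?_)
        rw [← mul_assoc, mul_inv_cancel₀ (ne_of_gt hε), one_mul, inv_mul_eq_div]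
      rw [e1, e2, e4]
    have htime : (∫ t in Ioi (0:ℝ), ∫ x : ℝ, sdw u0 u1 a b ε x t * fderiv ℝ φ (x, t) (0, 1)) =
        (u0 - a) * (ε * ∫ t in Ioi (0:ℝ), φ (-(ε * t), t)) +
        (u1 - b) * (ε * ∫ t in Ioi (0:ℝ), φ (ε * t, t)) := by
      rw [hswap, ← intervalIntegral.integral_Iic_add_Ioi
        hinner_int.integrableOn hinner_int.integrableOn, hsubL, hsubR]
    -- inner integrand splitting and assembling the total
    have hfluxint : ∀ t : ℝ, 0 < t → Integrable
        (fun x : ℝ => twoFlux fl fr x (sdw u0 u1 a b ε x t) * fderiv ℝ φ (x, t) (1, 0)) := by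
      intro t ht
      refine integrable_of_bound_supp ?_
        (((|pl| + |pr|) * (|u0| + |u1| + |a| + |b|) + (|ql| + |qr|)) * MD) R ?_ ?_
      · refine (Measurable.mul ?_ (((cont_Dv hsm ((1:ℝ),(0:ℝ))).comp
          (continuous_id.prodMk continuous_const)).measurable)).aestronglyMeasurable
        unfold twoFlux
        refine Measurable.ite (measurableSet_lt measurable_id measurable_const) ?_ ?_
        · exact ((sdw_meas_x u0 u1 a b ε t).const_mul pl).add_const ql
        · exact ((sdw_meas_x u0 u1 a b ε t).const_mul pr).add_const qr
      · intro x hx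
        rw [hDzx x t hx _, mul_zero]
      · intro x
        rw [abs_mul]
        refine mul_le_mul ?_ (hDbound _ _ hv10) (abs_nonneg _) (by positivity)
        unfold twoFlux
        have hs := hMs x t
        have hM0 : (0:ℝ) ≤ |u0| + |u1| + |a| + |b| := by positivity
        have hgen : ∀ p q : ℝ, |p * sdw u0 u1 a b ε x t + q| ≤
            (|pl| + |pr|) * (|u0| + |u1| + |a| + |b|) + (|ql| + |qr|) →
            True := fun _ _ _ => trivial
        have h1 : |pl * sdw u0 u1 a b ε x t + ql| ≤
            (|pl| + |pr|) * (|u0| + |u1| + |a| + |b|) + (|ql| + |qr|) := by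
          have step := mul_le_mul_of_nonneg_left hs (abs_nonneg pl)
          have hpr := mul_nonneg (abs_nonneg pr) hM0
          calc |pl * sdw u0 u1 a b ε x t + ql| ≤ |pl * sdw u0 u1 a b ε x t| + |ql| := abs_add_le _ _
            _ = |pl| * |sdw u0 u1 a b ε x t| + |ql| := by rw [abs_mul]
            _ ≤ (|pl| + |pr|) * (|u0| + |u1| + |a| + |b|) + (|ql| + |qr|) := by
                rw [add_mul]; linarith [abs_nonneg qr]
        have h2 : |pr * sdw u0 u1 a b ε x t + qr| ≤
            (|pl| + |pr|) * (|u0| + |u1| + |a| + |b|) + (|ql| + |qr|) := by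
          have step := mul_le_mul_of_nonneg_left hs (abs_nonneg pr)
          have hpl := mul_nonneg (abs_nonneg pl) hM0
          calc |pr * sdw u0 u1 a b ε x t + qr| ≤ |pr * sdw u0 u1 a b ε x t| + |qr| := abs_add_le _ _
            _ = |pr| * |sdw u0 u1 a b ε x t| + |qr| := by rw [abs_mul]
            _ ≤ (|pl| + |pr|) * (|u0| + |u1| + |a| + |b|) + (|ql| + |qr|) := by
                rw [add_mul]; linarith [abs_nonneg ql]
        split_ifs <;> assumption
    have hsdwDtint : ∀ t : ℝ, Integrable
        (fun x : ℝ => sdw u0 u1 a b ε x t * fderiv ℝ φ (x, t) (0, 1)) := by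
      intro t
      refine integrable_of_bound_supp ?_ ((|u0| + |u1| + |a| + |b|) * MD) R ?_ ?_
      · exact ((sdw_meas_x u0 u1 a b ε t).mul (((cont_Dv hsm ((0:ℝ),(1:ℝ))).comp
          (continuous_id.prodMk continuous_const)).measurable)).aestronglyMeasurable
      · intro x hx
        rw [hDzx x t hx _, mul_zero]
      · intro x
        rw [abs_mul]
        exact mul_le_mul (hMs _ _) (hDbound _ _ hv01) (abs_nonneg _) (by positivity)
    have hFxF_int : Integrable (fun t : ℝ => (fr b - fr u1) * φ (ε * t, t) +
        (fl a - fr b) * φ (0, t) + (fl u0 - fl a) * φ (-(ε * t), t))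
        (volume.restrict (Ioi (0:ℝ))) :=
      (((hphiRint.const_mul _).add (hphi0int.const_mul _)).add
        (hphiLint.const_mul _)).integrableOn
    have hsplit_inner : (∫ t in Ioi (0:ℝ), ∫ x : ℝ,
          (sdw u0 u1 a b ε x t * fderiv ℝ φ (x, t) (0, 1) +
           twoFlux fl fr x (sdw u0 u1 a b ε x t) * fderiv ℝ φ (x, t) (1, 0))) =
        (∫ t in Ioi (0:ℝ), ∫ x : ℝ, sdw u0 u1 a b ε x t * fderiv ℝ φ (x, t) (0, 1)) +
        ∫ t in Ioi (0:ℝ), ((fr b - fr u1) * φ (ε * t, t) +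
          (fl a - fr b) * φ (0, t) + (fl u0 - fl a) * φ (-(ε * t), t)) := by
      rw [← integral_add hItint hFxF_int]
      refine setIntegral_congr_fun measurableSet_Ioi (fun t ht => ?_)
      rw [mem_Ioi] at ht
      beta_reduce
      rw [integral_add (hsdwDtint t) (hfluxint t ht), stepA t ht]
    -- assembled : total equals integral of G
    have hGform : (∫ t in Ioi (0:ℝ), ∫ x : ℝ,
          (sdw u0 u1 a b ε x t * fderiv ℝ φ (x, t) (0, 1) +
           twoFlux fl fr x (sdw u0 u1 a b ε x t) * fderiv ℝ φ (x, t) (1, 0))) =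
        ∫ t in Ioi (0:ℝ), (ξ0 * (φ (0, t) - φ (-(ε * t), t)) + ξ1 * (φ (0, t) - φ (ε * t, t)) +
          (pl * ξ0 / ε) * (2 * φ (0, t) - φ (-(ε * t), t) - φ (ε * t, t))) := by
      rw [hsplit_inner, htime]
      have expand : ∀ t : ℝ,
          ξ0 * (φ (0, t) - φ (-(ε * t), t)) + ξ1 * (φ (0, t) - φ (ε * t, t)) +
            (pl * ξ0 / ε) * (2 * φ (0, t) - φ (-(ε * t), t) - φ (ε * t, t)) =
          ((u0 - a) * ε) * φ (-(ε * t), t) + ((u1 - b) * ε) * φ (ε * t, t) +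
            ((fr b - fr u1) * φ (ε * t, t) + (fl a - fr b) * φ (0, t) +
             (fl u0 - fl a) * φ (-(ε * t), t)) := by
        intro t
        rw [ha, hb, hfl, hfr]
        simp only
        rw [← Galg pl ql pr qr u0 u1 ξ0 ξ1 ε (φ (0,t)) (φ (-(ε*t),t)) (φ (ε*t,t))
          (ne_of_gt hε) hκsum hm]
        ring
      have : (∫ t in Ioi (0:ℝ), (ξ0 * (φ (0, t) - φ (-(ε * t), t)) +
            ξ1 * (φ (0, t) - φ (ε * t, t)) +
            (pl * ξ0 / ε) * (2 * φ (0, t) - φ (-(ε * t), t) - φ (ε * t, t)))) =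
          ∫ t in Ioi (0:ℝ), (((u0 - a) * ε) * φ (-(ε * t), t) + ((u1 - b) * ε) * φ (ε * t, t) +
            ((fr b - fr u1) * φ (ε * t, t) + (fl a - fr b) * φ (0, t) +
             (fl u0 - fl a) * φ (-(ε * t), t))) := by
        refine setIntegral_congr_fun measurableSet_Ioi (fun t _ => expand t)
      rw [this]
      have hsum1 : Integrable (fun t : ℝ => ((u0 - a) * ε) * φ (-(ε * t), t) +
          ((u1 - b) * ε) * φ (ε * t, t)) (volume.restrict (Ioi (0:ℝ))) :=
        ((hphiLint.const_mul _).add (hphiRint.const_mul _)).integrableOn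
      rw [integral_add hsum1 hFxF_int,
        integral_add ((hphiLint.const_mul _).integrableOn) ((hphiRint.const_mul _).integrableOn),
        integral_const_mul, integral_const_mul]
      ring
    rw [hGform, sub_zero]
    -- bound the G integral
    have hGzero : ∀ t : ℝ, R ≤ t →
        ξ0 * (φ (0, t) - φ (-(ε * t), t)) + ξ1 * (φ (0, t) - φ (ε * t, t)) +
          (pl * ξ0 / ε) * (2 * φ (0, t) - φ (-(ε * t), t) - φ (ε * t, t)) = 0 := by
      intro t ht
      have habs : R ≤ |t| := le_trans ht (le_abs_self t)
      rw [hφz 0 t habs, hφz _ t habs, hφz _ t habs]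
      ring
    have hGbound : ∀ t : ℝ, 0 < t →
        |ξ0 * (φ (0, t) - φ (-(ε * t), t)) + ξ1 * (φ (0, t) - φ (ε * t, t)) +
          (pl * ξ0 / ε) * (2 * φ (0, t) - φ (-(ε * t), t) - φ (ε * t, t))|
          ≤ ((ξ0 + ξ1) * (L * t) + 2 * (pl * ξ0) * L2 * t ^ 2) * ε := by
      intro t ht
      have hεt : 0 ≤ ε * t := (mul_pos hε ht).le
      have hd1 : |φ (0, t) - φ (-(ε * t), t)| ≤ L * (ε * t) := by
        have := hL ((0:ℝ), t) ((-(ε * t)), t)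
        have hnorm : ‖(((0:ℝ), t) : ℝ × ℝ) - ((-(ε * t)), t)‖ = ε * t := by
          simp only [Prod.mk_sub_mk, sub_self, Prod.norm_def, Real.norm_eq_abs,
            sub_neg_eq_add, zero_add, abs_zero]
          rw [abs_of_nonneg hεt, max_eq_left hεt]
        rw [hnorm] at this
        exact this
      have hd2 : |φ (0, t) - φ (ε * t, t)| ≤ L * (ε * t) := by
        have := hL ((0:ℝ), t) ((ε * t), t)
        have hnorm : ‖(((0:ℝ), t) : ℝ × ℝ) - ((ε * t), t)‖ = ε * t := by
          simp only [Prod.mk_sub_mk, sub_self, Prod.norm_def, Real.norm_eq_abs,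
            zero_sub, abs_neg, abs_zero]
          rw [abs_of_nonneg hεt, max_eq_left hεt]
        rw [hnorm] at this
        exact this
      have hd3 : |2 * φ (0, t) - φ (-(ε * t), t) - φ (ε * t, t)| ≤ 2 * L2 * (ε * t) ^ 2 := by
        have := secdiff hsm hL20 hL2 t hεt
        rw [show |φ (ε * t, t) + φ (-(ε * t), t) - 2 * φ (0, t)| =
          |-(2 * φ (0, t) - φ (-(ε * t), t) - φ (ε * t, t))| by congr 1; ring, abs_neg] at this
        exact this
      calc |ξ0 * (φ (0, t) - φ (-(ε * t), t)) + ξ1 * (φ (0, t) - φ (ε * t, t)) +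
            (pl * ξ0 / ε) * (2 * φ (0, t) - φ (-(ε * t), t) - φ (ε * t, t))|
          ≤ |ξ0 * (φ (0, t) - φ (-(ε * t), t))| + |ξ1 * (φ (0, t) - φ (ε * t, t))| +
            |(pl * ξ0 / ε) * (2 * φ (0, t) - φ (-(ε * t), t) - φ (ε * t, t))| :=
            le_trans (abs_add_le _ _) (add_le_add_left (abs_add_le _ _) _)
        _ ≤ ξ0 * (L * (ε * t)) + ξ1 * (L * (ε * t)) + (pl * ξ0 / ε) * (2 * L2 * (ε * t) ^ 2) := by
            rw [abs_mul, abs_mul, abs_mul, abs_of_nonneg hξ0, abs_of_nonneg hξ1,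
              abs_of_nonneg (by positivity : (0:ℝ) ≤ pl * ξ0 / ε)]
            refine add_le_add (add_le_add ?_ ?_) ?_
            · exact mul_le_mul_of_nonneg_left hd1 hξ0
            · exact mul_le_mul_of_nonneg_left hd2 hξ1
            · exact mul_le_mul_of_nonneg_left hd3 (by positivity)
        _ = ((ξ0 + ξ1) * (L * t) + 2 * (pl * ξ0) * L2 * t ^ 2) * ε := by
            field_simp
    have hGintg : Integrable (fun t : ℝ =>
        ξ0 * (φ (0, t) - φ (-(ε * t), t)) + ξ1 * (φ (0, t) - φ (ε * t, t)) +
          (pl * ξ0 / ε) * (2 * φ (0, t) - φ (-(ε * t), t) - φ (ε * t, t)))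
        (volume.restrict (Ioi (0:ℝ))) := by
      refine Integrable.integrableOn ?_
      refine Integrable.add (Integrable.add ?_ ?_) ?_
      · exact (hphi0int.sub hphiLint).const_mul _
      · exact (hphi0int.sub hphiRint).const_mul _
      · exact (((hphi0int.const_mul 2).sub hphiLint).sub hphiRint).const_mul _
    have hzero : (∫ t in Ioi R,
        (ξ0 * (φ (0, t) - φ (-(ε * t), t)) + ξ1 * (φ (0, t) - φ (ε * t, t)) +
          (pl * ξ0 / ε) * (2 * φ (0, t) - φ (-(ε * t), t) - φ (ε * t, t)))) = 0 :=
      setIntegral_eq_zero_of_forall_eq_zero (fun t ht => hGzero t (le_of_lt ht))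
    have hsplitIoc : (∫ t in Ioi (0:ℝ),
        (ξ0 * (φ (0, t) - φ (-(ε * t), t)) + ξ1 * (φ (0, t) - φ (ε * t, t)) +
          (pl * ξ0 / ε) * (2 * φ (0, t) - φ (-(ε * t), t) - φ (ε * t, t)))) =
        ∫ t in Ioc (0:ℝ) R,
        (ξ0 * (φ (0, t) - φ (-(ε * t), t)) + ξ1 * (φ (0, t) - φ (ε * t, t)) +
          (pl * ξ0 / ε) * (2 * φ (0, t) - φ (-(ε * t), t) - φ (ε * t, t))) := by
      rw [← Ioc_union_Ioi_eq_Ioi hR0.le,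
        setIntegral_union Ioc_disjoint_Ioi_same measurableSet_Ioi
          (hGintg.mono_measure (Measure.restrict_mono Ioc_subset_Ioi_self le_rfl))
          (hGintg.mono_measure (Measure.restrict_mono (Ioi_subset_Ioi hR0.le) le_rfl)),
        hzero, add_zero]
    rw [hsplitIoc]
    have hnorm := norm_setIntegral_le_of_norm_le_const (μ := volume) (s := Ioc (0:ℝ) R)
      (f := fun t => ξ0 * (φ (0, t) - φ (-(ε * t), t)) + ξ1 * (φ (0, t) - φ (ε * t, t)) +
          (pl * ξ0 / ε) * (2 * φ (0, t) - φ (-(ε * t), t) - φ (ε * t, t)))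
      (C := ((ξ0 + ξ1) * (L * R) + 2 * (pl * ξ0) * L2 * R ^ 2) * ε)
      (by rw [Real.volume_Ioc]; exact ENNReal.ofReal_lt_top) ?_
    · refine le_trans hnorm ?_
      rw [measureReal_def, Real.volume_Ioc, ENNReal.toReal_ofReal (by linarith), hC]
      ring_nf
      nlinarith [sq_nonneg R]
    · intro t ht
      rw [Real.norm_eq_abs]
      refine le_trans (hGbound t ht.1) ?_
      have ht2 : t ^ 2 ≤ R ^ 2 := by nlinarith [ht.1, ht.2]
      have h1 : (ξ0 + ξ1) * (L * t) ≤ (ξ0 + ξ1) * (L * R) :=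
        mul_le_mul_of_nonneg_left (mul_le_mul_of_nonneg_left ht.2 hL0) (by positivity)
      have h2 : 2 * (pl * ξ0) * L2 * t ^ 2 ≤ 2 * (pl * ξ0) * L2 * R ^ 2 :=
        mul_le_mul_of_nonneg_left ht2 (by positivity)
      exact mul_le_mul_of_nonneg_right (by linarith) hε.le
  have key' : ∀ ε : ℝ, ε ∈ Ioi (0:ℝ) →
      ‖(∫ t in Ioi (0:ℝ), ∫ x : ℝ,
          (sdw u0 u1 (u0 + ξ0 / ε) (u1 + ξ1 / ε) ε x t * fderiv ℝ φ (x, t) (0, 1) +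
           twoFlux fl fr x (sdw u0 u1 (u0 + ξ0 / ε) (u1 + ξ1 / ε) ε x t) *
             fderiv ℝ φ (x, t) (1, 0)))‖ ≤ C * ε := by
    intro ε hε
    have := key ε hε
    rwa [sub_zero] at this
  apply squeeze_zero_norm' (eventually_nhdsWithin_of_forall key')
  have hlin : Tendsto (fun ε : ℝ => C * ε) (𝓝 (0:ℝ)) (𝓝 (C * 0)) :=
    (continuous_const.mul continuous_id).tendsto 0
  rw [mul_zero] at hlin
  exact hlin.mono_left nhdsWithin_le_nhds

end Part1


/-- affine two-flux case. -/
theorem affine_two_flux_case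
    (pl ql pr qr : ℝ) (hpl : 0 ≤ pl) (hpr : pr ≤ 0) (hplr : 0 < pl - pr)
    (fl fr : ℝ → ℝ)
    (hfl : fl = fun u : ℝ => pl * u + ql) (hfr : fr = fun u : ℝ => pr * u + qr)
    (u0 u1 : ℝ)
    (κ : ℝ) (hκdef : κ = pl * u0 - pr * u1 + ql - qr) (hκ : 0 < κ)
    (ξ0 ξ1 : ℝ) (hξ0 : ξ0 = -pr * κ / (pl - pr)) (hξ1 : ξ1 = pl * κ / (pl - pr))
    (u0e u1e : ℝ → ℝ)
    (hu0e : u0e = fun ε : ℝ => u0 + ξ0 / ε) (hu1e : u1e = fun ε : ℝ => u1 + ξ1 / ε) :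
    WeakAsymptoticSolution fl fr u0 u1 u0e u1e ∧
    ConvergesToDeltaShock u0 u1 u0e u1e κ := by
  have hplrne : pl - pr ≠ 0 := ne_of_gt hplr
  have hκeq : ξ0 + ξ1 = κ := by rw [hξ0, hξ1]; field_simp; ring
  have hκsum : pl * u0 - pr * u1 + ql - qr = ξ0 + ξ1 := by rw [hκeq]; exact hκdef.symm
  have hm : pr * ξ1 = -(pl * ξ0) := by rw [hξ0, hξ1]; field_simp
  have hξ0nn : 0 ≤ ξ0 := by
    rw [hξ0]; exact div_nonneg (mul_nonneg (neg_nonneg.mpr hpr) hκ.le) hplr.le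
  have hξ1nn : 0 ≤ ξ1 := by
    rw [hξ1]; exact div_nonneg (mul_nonneg hpl hκ.le) hplr.le
  have hm0 : 0 ≤ pl * ξ0 := mul_nonneg hpl hξ0nn
  constructor
  · intro φ hφ
    obtain ⟨hsm, hcs, h0⟩ := hφ
    simp only [hfl, hfr, hu0e, hu1e]
    exact part1_aux hsm hcs h0 pl ql pr qr u0 u1 ξ0 ξ1 hκsum hm hξ0nn hξ1nn hm0
  · intro φ hφ
    obtain ⟨hsm, hcs, h0⟩ := hφ
    simp only [hu0e, hu1e, ← hκeq]
    exact part2_aux hsm hcs u0 u1 ξ0 ξ1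
end

section
/- (Example: square-root fluxes.) Let f_l(u) = √(u² + 1) + 1 and f_r(u) = 1/√(u² + 1), and take u_0 = u_1 = 1, so that κ = f_l(1) − f_r(1) = (2 + √2)/2. Define u_{0,ε} = 1 and u_{1,ε} = 1 + κ/ε. Then the shadow wave net (u_ε) is a weak asymptotic solution of ∂_t u + ∂_x f(x,u) = 0, and for every φ ∈ C_c^∞(ℝ × (0,∞)), ∫_0^∞ ∫_ℝ u_ε φ dx dt → ∫_0^∞ ∫_ℝ φ dx dt + ((2+√2)/2) ∫_0^∞ t φ(0,t) dt, i.e. u_ε converges distributionally to the delta shock 1 + ((2+√2)/2) t δ(x). -/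
open MeasureTheory Filter Set Topology

namespace SdwAux


/-- radius bound from compact support -/
lemma exists_radius {ψ : ℝ × ℝ → ℝ} (hK : HasCompactSupport ψ) :
    ∃ R > 0, ∀ p : ℝ × ℝ, R < |p.1| ∨ R < |p.2| → ψ p = 0 := by
  obtain ⟨R, hR0, hR⟩ := hK.isBounded.subset_closedBall_lt 0 0
  refine ⟨R, hR0, fun p hp => ?_⟩
  apply image_eq_zero_of_notMem_tsupport
  intro hmem
  have := hR hmem
  rw [Metric.mem_closedBall, Prod.dist_eq] at this
  simp only [Real.dist_eq, Prod.fst_zero, Prod.snd_zero, sub_zero] at this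
  rcases hp with h | h
  · exact absurd (le_trans (le_max_left _ _) this) (not_le.2 h)
  · exact absurd (le_trans (le_max_right _ _) this) (not_le.2 h)

lemma slice_x_hcs {ψ : ℝ × ℝ → ℝ} {R : ℝ}
    (hR : ∀ p : ℝ × ℝ, R < |p.1| ∨ R < |p.2| → ψ p = 0) (t : ℝ) :
    HasCompactSupport (fun x => ψ (x, t)) := by
  apply HasCompactSupport.intro (isCompact_Icc (a := -R) (b := R))
  intro x hx
  apply hR (x, t)
  left
  simp only [mem_Icc, not_and_or, not_le] at hx
  rcases hx with h | h
  · exact lt_abs.2 (Or.inr (by linarith))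
  · exact lt_abs.2 (Or.inl h)

lemma slice_t_hcs {ψ : ℝ × ℝ → ℝ} {R : ℝ}
    (hR : ∀ p : ℝ × ℝ, R < |p.1| ∨ R < |p.2| → ψ p = 0) (x : ℝ) :
    HasCompactSupport (fun t => ψ (x, t)) := by
  apply HasCompactSupport.intro (isCompact_Icc (a := -R) (b := R))
  intro t ht
  apply hR (x, t)
  right
  simp only [mem_Icc, not_and_or, not_le] at ht
  rcases ht with h | h
  · exact lt_abs.2 (Or.inr (by linarith))
  · exact lt_abs.2 (Or.inl h)

lemma integrable_slice_x {ψ : ℝ × ℝ → ℝ} (hc : Continuous ψ) (hK : HasCompactSupport ψ)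
    (t : ℝ) : Integrable (fun x => ψ (x, t)) := by
  obtain ⟨R, _, hR⟩ := exists_radius hK
  exact (hc.comp (continuous_id.prodMk continuous_const)).integrable_of_hasCompactSupport
    (slice_x_hcs hR t)

lemma integrable_slice_t {ψ : ℝ × ℝ → ℝ} (hc : Continuous ψ) (hK : HasCompactSupport ψ)
    (x : ℝ) : Integrable (fun t => ψ (x, t)) := by
  obtain ⟨R, _, hR⟩ := exists_radius hK
  exact (hc.comp (continuous_const.prodMk continuous_id)).integrable_of_hasCompactSupport
    (slice_t_hcs hR x)

/-- Fubini-type integrability of `t ↦ ∫ x, S.indicator ψ (x,t)` on `Ioi 0`. -/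
lemma integrable_prod_ind {ψ : ℝ × ℝ → ℝ} (hc : Continuous ψ) (hK : HasCompactSupport ψ)
    (S : Set (ℝ × ℝ)) (hS : MeasurableSet S) :
    Integrable (fun q : ℝ × ℝ => S.indicator ψ (q.2, q.1))
      ((volume.restrict (Ioi 0)).prod volume) := by
  have h1 : Integrable ψ ((volume : Measure ℝ).prod volume) := by
    rw [← Measure.volume_eq_prod]; exact hc.integrable_of_hasCompactSupport hK
  have h2 : Integrable (S.indicator ψ) ((volume : Measure ℝ).prod volume) := h1.indicator hS
  have h3 := h2.swap
  have h4 : Integrable ((S.indicator ψ) ∘ Prod.swap)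
      (((volume : Measure ℝ).prod volume).restrict ((Ioi 0) ×ˢ univ)) := h3.restrict
  have hmeq : ((volume : Measure ℝ).restrict (Ioi 0)).prod (volume : Measure ℝ)
      = ((volume : Measure ℝ).prod volume).restrict ((Ioi 0) ×ˢ univ) := by
    rw [← Measure.prod_restrict, Measure.restrict_univ]
  rw [hmeq]
  exact h4

lemma outer_integrable {ψ : ℝ × ℝ → ℝ} (hc : Continuous ψ) (hK : HasCompactSupport ψ)
    (S : Set (ℝ × ℝ)) (hS : MeasurableSet S) :
    Integrable (fun t => ∫ x : ℝ, S.indicator ψ (x, t)) (volume.restrict (Ioi 0)) := by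
  have := (integrable_prod_ind hc hK S hS).integral_prod_left
  exact this

lemma swap_integral {ψ : ℝ × ℝ → ℝ} (hc : Continuous ψ) (hK : HasCompactSupport ψ) :
    ∫ t in Ioi (0:ℝ), ∫ x : ℝ, ψ (x, t) = ∫ x : ℝ, ∫ t in Ioi (0:ℝ), ψ (x, t) := by
  have hint : Integrable (Function.uncurry fun (t x : ℝ) => ψ (x, t))
      ((volume.restrict (Ioi 0)).prod volume) := by
    have := integrable_prod_ind hc hK univ MeasurableSet.univ
    exact (by simpa [Set.indicator_univ] using this :
      Integrable (fun q : ℝ × ℝ => ψ (q.2, q.1)) ((volume.restrict (Ioi 0)).prod volume))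
  exact integral_integral_swap hint

/-- the strip set in `(x,t)` coordinates -/
def strip (ε : ℝ) : Set (ℝ × ℝ) := {p : ℝ × ℝ | 0 ≤ p.1 ∧ p.1 < ε * p.2}

lemma strip_measurable (ε : ℝ) : MeasurableSet (strip ε) := by
  have h1 : MeasurableSet {p : ℝ × ℝ | 0 ≤ p.1} :=
    measurableSet_le measurable_const measurable_fst
  have h2 : MeasurableSet {p : ℝ × ℝ | p.1 < ε * p.2} :=
    measurableSet_lt measurable_fst (measurable_snd.const_mul ε)
  exact h1.inter h2

lemma ind_strip_eq (ε t : ℝ) (ψ : ℝ × ℝ → ℝ) :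
    (fun x => (strip ε).indicator ψ (x, t)) =
      fun x => (Ico (0:ℝ) (ε * t)).indicator (fun x => ψ (x, t)) x := by
  funext x
  by_cases hx : 0 ≤ x ∧ x < ε * t <;>
    simp [Set.indicator_apply, strip, Set.mem_Ico, hx]

lemma integral_ind_strip (ε t : ℝ) (ψ : ℝ × ℝ → ℝ) :
    ∫ x : ℝ, (strip ε).indicator ψ (x, t) = ∫ x in Ico (0:ℝ) (ε * t), ψ (x, t) := by
  rw [ind_strip_eq, integral_indicator measurableSet_Ico]

lemma outer_integrable_strip {ψ : ℝ × ℝ → ℝ} (hc : Continuous ψ) (hK : HasCompactSupport ψ)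
    (ε : ℝ) :
    Integrable (fun t => ∫ x in Ico (0:ℝ) (ε * t), ψ (x, t)) (volume.restrict (Ioi 0)) := by
  have := outer_integrable hc hK (strip ε) (strip_measurable ε)
  apply this.congr
  filter_upwards with t
  exact integral_ind_strip ε t ψ

lemma key {ψ : ℝ × ℝ → ℝ} (hc : Continuous ψ) (hK : HasCompactSupport ψ)
    {L : NNReal} (hL : LipschitzWith L ψ) :
    Tendsto (fun ε : ℝ => ε⁻¹ * ∫ t in Ioi (0:ℝ), ∫ x in Ico (0:ℝ) (ε * t), ψ (x, t))
      (𝓝[>] 0) (𝓝 (∫ t in Ioi (0:ℝ), t * ψ (0, t))) := by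
  obtain ⟨R, hR0, hR⟩ := exists_radius hK
  set c := ∫ t in Ioi (0:ℝ), t * ψ (0, t) with hc_def
  have hgint : Integrable (fun t => t * ψ (0, t)) (volume.restrict (Ioi 0)) := by
    apply Integrable.restrict
    apply Continuous.integrable_of_hasCompactSupport
      (continuous_id.mul (hc.comp (continuous_const.prodMk continuous_id)))
    exact (slice_t_hcs hR 0).mul_left
  -- the main estimate
  have hest : ∀ ε : ℝ, 0 < ε →
      ‖(ε⁻¹ * ∫ t in Ioi (0:ℝ), ∫ x in Ico (0:ℝ) (ε * t), ψ (x, t)) - c‖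
        ≤ ((L : ℝ) * R ^ 2 * R) * ε := by
    intro ε hε
    have hFint := outer_integrable_strip hc hK ε
    have hsub : (ε⁻¹ * ∫ t in Ioi (0:ℝ), ∫ x in Ico (0:ℝ) (ε * t), ψ (x, t)) - c
        = ∫ t in Ioi (0:ℝ),
            (ε⁻¹ * (∫ x in Ico (0:ℝ) (ε * t), ψ (x, t)) - t * ψ (0, t)) := by
      rw [integral_sub (hFint.const_mul _) hgint, integral_const_mul]
    rw [hsub]
    have hb : ∀ t ∈ Ioi (0:ℝ),
        ‖ε⁻¹ * (∫ x in Ico (0:ℝ) (ε * t), ψ (x, t)) - t * ψ (0, t)‖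
          ≤ (Ioc (0:ℝ) R).indicator (fun _ => (L : ℝ) * R ^ 2 * ε) t := by
      intro t ht
      rw [mem_Ioi] at ht
      by_cases htR : t ≤ R
      · rw [Set.indicator_of_mem (by exact ⟨ht, htR⟩)]
        have hεt : (0:ℝ) ≤ ε * t := le_of_lt (mul_pos hε ht)
        have hvol : (volume (Ico (0:ℝ) (ε * t))).toReal = ε * t := by
          rw [Real.volume_Ico, sub_zero, ENNReal.toReal_ofReal hεt]
        have hconst : ∫ x in Ico (0:ℝ) (ε * t), ψ (0, t) = (ε * t) * ψ (0, t) := by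
          rw [setIntegral_const, measureReal_def, hvol, smul_eq_mul]
        have hsub2 : ∫ x in Ico (0:ℝ) (ε * t), (ψ (x, t) - ψ (0, t))
            = (∫ x in Ico (0:ℝ) (ε * t), ψ (x, t)) - (ε * t) * ψ (0, t) := by
          rw [integral_sub ((integrable_slice_x hc hK t).integrableOn)
            (integrableOn_const (by rw [Real.volume_Ico]; exact ENNReal.ofReal_ne_top)),
            setIntegral_const, measureReal_def, hvol, smul_eq_mul]
        have hnorm : ‖∫ x in Ico (0:ℝ) (ε * t), (ψ (x, t) - ψ (0, t))‖
            ≤ ((L : ℝ) * (ε * t)) * (ε * t) := by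
          have hbd : ∀ x ∈ Ico (0:ℝ) (ε * t),
              ‖ψ (x, t) - ψ (0, t)‖ ≤ (L : ℝ) * (ε * t) := by
            intro x hx
            rw [mem_Ico] at hx
            have hd : dist ((x:ℝ), t) ((0:ℝ), t) = |x| := by
              rw [Prod.dist_eq]
              simp [Real.dist_eq]
            rw [Real.norm_eq_abs, ← Real.dist_eq]
            calc dist (ψ (x, t)) (ψ (0, t)) ≤ (L : ℝ) * dist ((x:ℝ), t) ((0:ℝ), t) :=
                hL.dist_le_mul _ _
              _ = (L : ℝ) * |x| := by rw [hd]
              _ ≤ (L : ℝ) * (ε * t) := mul_le_mul_of_nonneg_left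
                  (by rw [abs_of_nonneg hx.1]; exact hx.2.le) L.coe_nonneg
          have hmeas : AEStronglyMeasurable (fun x => ψ (x, t) - ψ (0, t))
              (volume.restrict (Ico (0:ℝ) (ε * t))) :=
            (((hc.comp (continuous_id.prodMk continuous_const)).sub
              continuous_const).aestronglyMeasurable).restrict
          have := norm_setIntegral_le_of_norm_le_const (μ := volume)
            (s := Ico (0:ℝ) (ε * t)) (C := (L : ℝ) * (ε * t))
            (f := fun x => ψ (x, t) - ψ (0, t))
            (by rw [Real.volume_Ico]; exact ENNReal.ofReal_lt_top) hbd
          calc ‖∫ x in Ico (0:ℝ) (ε * t), (ψ (x, t) - ψ (0, t))‖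
              ≤ ((L : ℝ) * (ε * t)) * (volume (Ico (0:ℝ) (ε * t))).toReal := this
            _ = ((L : ℝ) * (ε * t)) * (ε * t) := by rw [hvol]
        have heq : ε⁻¹ * (∫ x in Ico (0:ℝ) (ε * t), ψ (x, t)) - t * ψ (0, t)
            = ε⁻¹ * ∫ x in Ico (0:ℝ) (ε * t), (ψ (x, t) - ψ (0, t)) := by
          have hcl : ε⁻¹ * (ε * t * ψ (0, t)) = t * ψ (0, t) := by
            field_simp
          rw [hsub2, mul_sub, hcl]
        rw [heq, norm_mul, Real.norm_eq_abs, abs_of_pos (inv_pos.2 hε)]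
        calc ε⁻¹ * ‖∫ x in Ico (0:ℝ) (ε * t), (ψ (x, t) - ψ (0, t))‖
            ≤ ε⁻¹ * (((L : ℝ) * (ε * t)) * (ε * t)) := by
              exact mul_le_mul_of_nonneg_left hnorm (le_of_lt (inv_pos.2 hε))
          _ = (L : ℝ) * ε * t ^ 2 := by field_simp
          _ ≤ (L : ℝ) * R ^ 2 * ε := by
              have h1 : t ^ 2 ≤ R ^ 2 := by nlinarith
              nlinarith [L.coe_nonneg, hε.le, h1,
                mul_le_mul_of_nonneg_left h1 (mul_nonneg L.coe_nonneg hε.le)]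
      · push_neg at htR
        have h1 : ∫ x in Ico (0:ℝ) (ε * t), ψ (x, t) = 0 := by
          have : ∀ x, ψ (x, t) = 0 := fun x => hR (x, t) (Or.inr (by
            rw [abs_of_pos (lt_trans hR0 htR)]; exact htR))
          simp [this]
        have h2 : ψ (0, t) = 0 := hR (0, t) (Or.inr (by
          rw [abs_of_pos (lt_trans hR0 htR)]; exact htR))
        rw [Set.indicator_of_notMem (by simp [mem_Ioc]; intro _; linarith)]
        simp [h1, h2]
    have hbint : Integrable ((Ioc (0:ℝ) R).indicator (fun _ => (L : ℝ) * R ^ 2 * ε))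
        (volume.restrict (Ioi 0)) := by
      apply Integrable.restrict
      rw [integrable_indicator_iff measurableSet_Ioc]
      exact integrableOn_const (by rw [Real.volume_Ioc]; exact ENNReal.ofReal_ne_top)
    calc ‖∫ t in Ioi (0:ℝ), (ε⁻¹ * (∫ x in Ico (0:ℝ) (ε * t), ψ (x, t)) - t * ψ (0, t))‖
        ≤ ∫ t in Ioi (0:ℝ), (Ioc (0:ℝ) R).indicator (fun _ => (L : ℝ) * R ^ 2 * ε) t := by
          apply norm_integral_le_of_norm_le hbint
          exact (ae_restrict_iff' measurableSet_Ioi).2 (ae_of_all _ hb)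
      _ = ((L : ℝ) * R ^ 2 * ε) * R := by
          rw [setIntegral_indicator measurableSet_Ioc,
            inter_eq_self_of_subset_right Ioc_subset_Ioi_self, setIntegral_const,
            measureReal_def, Real.volume_Ioc, sub_zero, ENNReal.toReal_ofReal hR0.le, smul_eq_mul, mul_comm]
      _ = ((L : ℝ) * R ^ 2 * R) * ε := by ring
  -- conclude by squeezing
  have htend0 : Tendsto (fun ε : ℝ =>
      (ε⁻¹ * ∫ t in Ioi (0:ℝ), ∫ x in Ico (0:ℝ) (ε * t), ψ (x, t)) - c) (𝓝[>] 0) (𝓝 0) := by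
    have hg : Tendsto (fun ε : ℝ => ((L : ℝ) * R ^ 2 * R) * ε) (𝓝[>] (0:ℝ)) (𝓝 0) := by
      have h2 := (continuous_const.mul continuous_id).tendsto (0:ℝ)
        (f := fun ε : ℝ => ((L : ℝ) * R ^ 2 * R) * ε)
      rw [mul_zero] at h2
      exact h2.mono_left nhdsWithin_le_nhds
    refine squeeze_zero_norm' ?_ hg
    filter_upwards [self_mem_nhdsWithin] with ε hε
    exact hest ε hε
  have := htend0.add_const c
  simpa using this

/-- partial derivative in direction `v` -/
noncomputable def pder (φ : ℝ × ℝ → ℝ) (v : ℝ × ℝ) : ℝ × ℝ → ℝ :=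
  fun p => fderiv ℝ φ p v

lemma pder_contDiff {φ : ℝ × ℝ → ℝ} (hφ : ContDiff ℝ (⊤ : ℕ∞) φ) (v : ℝ × ℝ) :
    ContDiff ℝ (⊤ : ℕ∞) (pder φ v) := by
  exact (hφ.fderiv_right (by simp)).clm_apply contDiff_const

lemma pder_cont {φ : ℝ × ℝ → ℝ} (hφ : ContDiff ℝ (⊤ : ℕ∞) φ) (v : ℝ × ℝ) :
    Continuous (pder φ v) := (pder_contDiff hφ v).continuous

lemma pder_hcs {φ : ℝ × ℝ → ℝ} (hK : HasCompactSupport φ) (v : ℝ × ℝ) :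
    HasCompactSupport (pder φ v) := hK.fderiv_apply (𝕜 := ℝ) (f := φ) v

lemma pder_lip {φ : ℝ × ℝ → ℝ} (hφ : ContDiff ℝ (⊤ : ℕ∞) φ) (hK : HasCompactSupport φ) (v : ℝ × ℝ) :
    ∃ L : NNReal, LipschitzWith L (pder φ v) :=
  ContDiff.lipschitzWith_of_hasCompactSupport (pder_hcs hK v) (pder_contDiff hφ v) (by simp)

lemma hasDerivAt_t {φ : ℝ × ℝ → ℝ} (hφ : ContDiff ℝ (⊤ : ℕ∞) φ) (x t : ℝ) :
    HasDerivAt (fun s => φ (x, s)) (pder φ (0, 1) (x, t)) t := by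
  have h1 : HasFDerivAt φ (fderiv ℝ φ (x, t)) (x, t) :=
    (hφ.differentiable (by simp) (x, t)).hasFDerivAt
  have h2 : HasDerivAt (fun s : ℝ => ((x : ℝ), s)) ((0 : ℝ), (1 : ℝ)) t :=
    (hasDerivAt_const t x).prodMk (hasDerivAt_id t)
  exact h1.comp_hasDerivAt t h2

lemma hasDerivAt_x {φ : ℝ × ℝ → ℝ} (hφ : ContDiff ℝ (⊤ : ℕ∞) φ) (x t : ℝ) :
    HasDerivAt (fun y => φ (y, t)) (pder φ (1, 0) (x, t)) x := by
  have h1 : HasFDerivAt φ (fderiv ℝ φ (x, t)) (x, t) :=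
    (hφ.differentiable (by simp) (x, t)).hasFDerivAt
  have h2 : HasDerivAt (fun y : ℝ => (y, (t : ℝ))) ((1 : ℝ), (0 : ℝ)) x :=
    (hasDerivAt_id x).prodMk (hasDerivAt_const x t)
  exact h1.comp_hasDerivAt x h2

lemma abs_big {R t : ℝ} (ht : max R 0 < t) : R < |t| := by
  rw [abs_of_nonneg (le_of_lt (lt_of_le_of_lt (le_max_right R 0) ht))]
  exact lt_of_le_of_lt (le_max_left R 0) ht

lemma abs_big_neg {R x : ℝ} (hx : x < min (-R) 0) : R < |x| := by
  have hx0 : x < 0 := lt_of_lt_of_le hx (min_le_right _ _)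
  rw [abs_of_neg hx0]
  have := lt_of_lt_of_le hx (min_le_left _ _)
  linarith

lemma tendsto_slice_t_top {ψ : ℝ × ℝ → ℝ} {R : ℝ}
    (hR : ∀ p : ℝ × ℝ, R < |p.1| ∨ R < |p.2| → ψ p = 0) (x : ℝ) :
    Tendsto (fun t => ψ (x, t)) atTop (𝓝 0) := by
  apply Tendsto.congr' _ tendsto_const_nhds
  filter_upwards [eventually_gt_atTop (max R 0)] with t ht
  exact (hR (x, t) (Or.inr (abs_big ht))).symm

lemma tendsto_slice_x_top {ψ : ℝ × ℝ → ℝ} {R : ℝ}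
    (hR : ∀ p : ℝ × ℝ, R < |p.1| ∨ R < |p.2| → ψ p = 0) (t : ℝ) :
    Tendsto (fun x => ψ (x, t)) atTop (𝓝 0) := by
  apply Tendsto.congr' _ tendsto_const_nhds
  filter_upwards [eventually_gt_atTop (max R 0)] with x hx
  exact (hR (x, t) (Or.inl (abs_big hx))).symm

lemma tendsto_slice_x_bot {ψ : ℝ × ℝ → ℝ} {R : ℝ}
    (hR : ∀ p : ℝ × ℝ, R < |p.1| ∨ R < |p.2| → ψ p = 0) (t : ℝ) :
    Tendsto (fun x => ψ (x, t)) atBot (𝓝 0) := by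
  apply Tendsto.congr' _ tendsto_const_nhds
  filter_upwards [eventually_lt_atBot (min (-R) 0)] with x hx
  exact (hR (x, t) (Or.inl (abs_big_neg hx))).symm

section TestFun

variable {φ : ℝ × ℝ → ℝ} (hsm : ContDiff ℝ (⊤ : ℕ∞) φ) (hK : HasCompactSupport φ)
  (h0 : ∀ p : ℝ × ℝ, p.2 ≤ 0 → φ p = 0)

include hsm hK

/-- the `t`-integral of the `t`-partial vanishes -/
lemma integral_Ioi_pder_t (h0 : ∀ p : ℝ × ℝ, p.2 ≤ 0 → φ p = 0) (x : ℝ) :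
    ∫ t in Ioi (0:ℝ), pder φ (0, 1) (x, t) = 0 := by
  obtain ⟨R, hR0, hR⟩ := exists_radius hK
  have h := integral_Ioi_of_hasDerivAt_of_tendsto' (a := (0:ℝ))
    (f := fun s => φ (x, s)) (f' := fun s => pder φ (0, 1) (x, s)) (m := 0)
    (fun t _ => hasDerivAt_t hsm x t)
    ((integrable_slice_t (pder_cont hsm _) (pder_hcs hK _) x).integrableOn)
    (tendsto_slice_t_top hR x)
  rw [h]
  simp [h0 (x, 0) le_rfl]

lemma integral_Iic_pder_x (t : ℝ) :
    ∫ x in Iio (0:ℝ), pder φ (1, 0) (x, t) = φ (0, t) := by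
  obtain ⟨R, hR0, hR⟩ := exists_radius hK
  rw [← integral_Iic_eq_integral_Iio]
  have h := integral_Iic_of_hasDerivAt_of_tendsto' (a := (0:ℝ))
    (f := fun y => φ (y, t)) (f' := fun y => pder φ (1, 0) (y, t)) (m := 0)
    (fun y _ => hasDerivAt_x hsm y t)
    ((integrable_slice_x (pder_cont hsm _) (pder_hcs hK _) t).integrableOn)
    (tendsto_slice_x_bot hR t)
  rw [h, sub_zero]

lemma integral_Ici_pder_x (t : ℝ) :
    ∫ x in Ici (0:ℝ), pder φ (1, 0) (x, t) = -φ (0, t) := by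
  obtain ⟨R, hR0, hR⟩ := exists_radius hK
  rw [integral_Ici_eq_integral_Ioi]
  have h := integral_Ioi_of_hasDerivAt_of_tendsto' (a := (0:ℝ))
    (f := fun y => φ (y, t)) (f' := fun y => pder φ (1, 0) (y, t)) (m := 0)
    (fun y _ => hasDerivAt_x hsm y t)
    ((integrable_slice_x (pder_cont hsm _) (pder_hcs hK _) t).integrableOn)
    (tendsto_slice_x_top hR t)
  rw [h, zero_sub]

/-- integration by parts: `∫ t ∂_tφ(0,t) = -∫ φ(0,t)` -/
lemma integral_t_pder_t (h0 : ∀ p : ℝ × ℝ, p.2 ≤ 0 → φ p = 0) :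
    ∫ t in Ioi (0:ℝ), t * pder φ (0, 1) (0, t) = -∫ t in Ioi (0:ℝ), φ (0, t) := by
  obtain ⟨R, hR0, hR⟩ := exists_radius hK
  have hφc : Continuous φ := hsm.continuous
  have hint1 : Integrable (fun t => φ (0, t)) := integrable_slice_t hφc hK 0
  have hint2 : Integrable (fun t => t * pder φ (0, 1) (0, t)) := by
    apply Continuous.integrable_of_hasCompactSupport
      (continuous_id.mul ((pder_cont hsm _).comp (continuous_const.prodMk continuous_id)))
    obtain ⟨R', hR'0, hR'⟩ := exists_radius (pder_hcs hK ((0:ℝ), (1:ℝ)))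
    exact (slice_t_hcs hR' 0).mul_left
  have hderiv : ∀ t ∈ Ici (0:ℝ), HasDerivAt (fun s => s * φ (0, s))
      (φ (0, t) + t * pder φ (0, 1) (0, t)) t := by
    intro t _
    have := (hasDerivAt_id t).mul (hasDerivAt_t hsm 0 t)
    exact this.congr_deriv (by simp)
  have htop : Tendsto (fun s => s * φ (0, s)) atTop (𝓝 0) := by
    apply Tendsto.congr' _ tendsto_const_nhds
    filter_upwards [eventually_gt_atTop (max R 0)] with t ht
    simp [hR (0, t) (Or.inr (abs_big ht))]
  have h := integral_Ioi_of_hasDerivAt_of_tendsto' (a := (0:ℝ))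
    (f := fun s => s * φ (0, s))
    (f' := fun t => φ (0, t) + t * pder φ (0, 1) (0, t)) (m := 0)
    hderiv ((hint1.add hint2).integrableOn) htop
  simp only [zero_mul, sub_zero, zero_sub, mul_zero, neg_zero] at h
  have h2 : (∫ t in Ioi (0:ℝ), φ (0, t)) + ∫ t in Ioi (0:ℝ), t * pder φ (0, 1) (0, t) = 0 := by
    rw [← integral_add hint1.integrableOn hint2.integrableOn]
    simpa using h
  linarith

end TestFun

lemma outer_integrable_univ {ψ : ℝ × ℝ → ℝ} (hc : Continuous ψ) (hK : HasCompactSupport ψ) :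
    Integrable (fun t => ∫ x : ℝ, ψ (x, t)) (volume.restrict (Ioi 0)) := by
  simpa [Set.indicator_univ] using outer_integrable hc hK univ MeasurableSet.univ

/-- pointwise identity for the shadow wave with these particular states -/
lemma sdw_mul_eq {κ ε t : ℝ} (hε : 0 < ε) (ht : 0 < t) (g : ℝ → ℝ) :
    (fun x => sdw 1 1 1 (1 + κ / ε) ε x t * g x)
      = fun x => g x + (κ / ε) * (Ico (0:ℝ) (ε * t)).indicator g x := by
  have hεt : 0 < ε * t := mul_pos hε ht
  funext x
  rcases lt_or_ge x 0 with hx0 | hx0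
  · have hni : x ∉ Ico (0:ℝ) (ε * t) := by rw [mem_Ico]; push_neg; intro h; linarith
    rw [Set.indicator_of_notMem hni]
    unfold sdw
    by_cases h1 : x < -(ε * t) <;> simp [h1, hx0]
  · rcases lt_or_ge x (ε * t) with hx1 | hx1
    · have hi : x ∈ Ico (0:ℝ) (ε * t) := ⟨hx0, hx1⟩
      rw [Set.indicator_of_mem hi]
      have h1 : ¬ x < -(ε * t) := by push_neg; linarith
      have h2 : ¬ x < 0 := not_lt.2 hx0
      unfold sdw
      rw [if_neg h1, if_neg h2, if_pos hx1]
      ring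
    · have hni : x ∉ Ico (0:ℝ) (ε * t) := by rw [mem_Ico]; push_neg; intro _; exact hx1
      rw [Set.indicator_of_notMem hni]
      have h1 : ¬ x < -(ε * t) := by push_neg; linarith
      have h2 : ¬ x < 0 := by push_neg; linarith
      have h3 : ¬ x < ε * t := not_lt.2 hx1
      unfold sdw
      rw [if_neg h1, if_neg h2, if_neg h3]
      ring

lemma part3 (κ : ℝ) : ConvergesToDeltaShock 1 1 (fun _ => 1) (fun ε => 1 + κ / ε) κ := by
  intro φ hφ
  obtain ⟨hsm, hK, h0⟩ := hφ
  have hc : Continuous φ := hsm.continuous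
  obtain ⟨L, hL⟩ := ContDiff.lipschitzWith_of_hasCompactSupport hK hsm (by simp)
  have hkey := key hc hK hL
  have htarget : (∫ t in Ioi (0:ℝ), ∫ x : ℝ, (if x < 0 then (1:ℝ) else 1) * φ (x, t))
      = ∫ t in Ioi (0:ℝ), ∫ x : ℝ, φ (x, t) := by simp
  rw [htarget]
  set I1 := ∫ t in Ioi (0:ℝ), ∫ x : ℝ, φ (x, t) with hI1
  have hlim : Tendsto (fun ε : ℝ =>
      I1 + κ * (ε⁻¹ * ∫ t in Ioi (0:ℝ), ∫ x in Ico (0:ℝ) (ε * t), φ (x, t)))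
      (𝓝[>] (0:ℝ)) (𝓝 (I1 + κ * ∫ t in Ioi (0:ℝ), t * φ (0, t))) :=
    tendsto_const_nhds.add (hkey.const_mul κ)
  apply hlim.congr'
  filter_upwards [self_mem_nhdsWithin] with ε (hε : 0 < ε)
  have hinner : EqOn (fun t => (∫ x : ℝ, φ (x, t))
        + (κ / ε) * ∫ x in Ico (0:ℝ) (ε * t), φ (x, t))
      (fun t => ∫ x : ℝ, sdw 1 1 1 (1 + κ / ε) ε x t * φ (x, t)) (Ioi 0) := by
    intro t ht
    rw [mem_Ioi] at ht
    have hident := sdw_mul_eq (κ := κ) hε ht (fun x => φ (x, t))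
    simp only
    rw [hident, integral_add (integrable_slice_x hc hK t)
      (((integrable_slice_x hc hK t).indicator measurableSet_Ico).const_mul _),
      integral_const_mul, integral_indicator measurableSet_Ico]
  rw [← setIntegral_congr_fun measurableSet_Ioi hinner,
    integral_add (outer_integrable_univ hc hK)
      ((outer_integrable_strip hc hK ε).const_mul _),
    integral_const_mul, div_eq_mul_inv, mul_assoc]

lemma outer_integrable_left {ψ : ℝ × ℝ → ℝ} (hc : Continuous ψ) (hK : HasCompactSupport ψ) :
    Integrable (fun t => ∫ x in Iio (0:ℝ), ψ (x, t)) (volume.restrict (Ioi 0)) := by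
  have h := outer_integrable hc hK {p : ℝ × ℝ | p.1 < 0}
    (measurableSet_lt measurable_fst measurable_const)
  apply h.congr
  filter_upwards with t
  rw [← integral_indicator measurableSet_Iio]
  refine integral_congr_ae (ae_of_all _ fun x => ?_)
  by_cases hx : x < 0 <;> simp [Set.indicator_apply, hx]

lemma outer_integrable_right {ψ : ℝ × ℝ → ℝ} (hc : Continuous ψ) (hK : HasCompactSupport ψ) :
    Integrable (fun t => ∫ x in Ici (0:ℝ), ψ (x, t)) (volume.restrict (Ioi 0)) := by
  have h := outer_integrable hc hK {p : ℝ × ℝ | 0 ≤ p.1}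
    (measurableSet_le measurable_const measurable_fst)
  apply h.congr
  filter_upwards with t
  rw [← integral_indicator measurableSet_Ici]
  refine integral_congr_ae (ae_of_all _ fun x => ?_)
  by_cases hx : (0:ℝ) ≤ x <;> simp [Set.indicator_apply, hx]

lemma sqrt_bounds : 1 ≤ Real.sqrt 2 ∧ (Real.sqrt 2)⁻¹ ≤ 1 := by
  have h : (1:ℝ) ≤ Real.sqrt 2 := by
    have := Real.sqrt_le_sqrt (show (1:ℝ) ≤ 2 by norm_num)
    rwa [Real.sqrt_one] at this
  refine ⟨h, ?_⟩
  rw [← one_div, div_le_one (by linarith)]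
  exact h

lemma abs_inv_sqrt_le (u : ℝ) : |1 / Real.sqrt (u ^ 2 + 1)| ≤ 1 := by
  have h1 : (1:ℝ) ≤ Real.sqrt (u ^ 2 + 1) := by
    have := Real.sqrt_le_sqrt (show (1:ℝ) ≤ u ^ 2 + 1 by nlinarith [sq_nonneg u])
    rwa [Real.sqrt_one] at this
  rw [abs_of_nonneg (by positivity), div_le_one (by linarith)]
  exact h1

/-- pointwise decomposition of the weak-solution integrand -/
lemma flux_mul_eq {κ ε t : ℝ} (hε : 0 < ε) (ht : 0 < t) (a b : ℝ → ℝ) :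
    (fun x => sdw 1 1 1 (1 + κ / ε) ε x t * a x +
        twoFlux (fun u => Real.sqrt (u ^ 2 + 1) + 1) (fun u => 1 / Real.sqrt (u ^ 2 + 1)) x
          (sdw 1 1 1 (1 + κ / ε) ε x t) * b x)
      = fun x => a x + ((κ / ε) * (Ico (0:ℝ) (ε * t)).indicator a x
          + ((Real.sqrt 2 + 1) * (Iio (0:ℝ)).indicator b x
          + ((Real.sqrt 2)⁻¹ * (Ici (0:ℝ)).indicator b x
          + (1 / Real.sqrt ((1 + κ / ε) ^ 2 + 1) - (Real.sqrt 2)⁻¹)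
              * (Ico (0:ℝ) (ε * t)).indicator b x))) := by
  have hεt : 0 < ε * t := mul_pos hε ht
  have h2 : ((1:ℝ) ^ 2 + 1) = 2 := by norm_num
  funext x
  rcases lt_or_ge x 0 with hx0 | hx0
  · have hsdw : sdw 1 1 1 (1 + κ / ε) ε x t = 1 := by
      unfold sdw
      by_cases h1 : x < -(ε * t) <;> simp [h1, hx0]
    have hfx : twoFlux (fun u => Real.sqrt (u ^ 2 + 1) + 1) (fun u => 1 / Real.sqrt (u ^ 2 + 1))
        x (1:ℝ) = Real.sqrt 2 + 1 := by
      simp only [twoFlux, if_pos hx0]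
      norm_num
    rw [hsdw, hfx,
      Set.indicator_of_notMem (fun h => absurd h.1 (not_le.2 hx0)),
      Set.indicator_of_mem (mem_Iio.2 hx0),
      Set.indicator_of_notMem (fun h => absurd (mem_Ici.1 h) (not_le.2 hx0)),
      Set.indicator_of_notMem (fun h => absurd h.1 (not_le.2 hx0))]
    ring
  · rcases lt_or_ge x (ε * t) with hx1 | hx1
    · have hsdw : sdw 1 1 1 (1 + κ / ε) ε x t = 1 + κ / ε := by
        unfold sdw
        rw [if_neg (by push_neg; linarith), if_neg (not_lt.2 hx0), if_pos hx1]
      have hfx : twoFlux (fun u => Real.sqrt (u ^ 2 + 1) + 1) (fun u => 1 / Real.sqrt (u ^ 2 + 1))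
          x (1 + κ / ε) = 1 / Real.sqrt ((1 + κ / ε) ^ 2 + 1) := by
        simp only [twoFlux, if_neg (not_lt.2 hx0)]
      rw [hsdw, hfx,
        Set.indicator_of_mem (mem_Ico.2 ⟨hx0, hx1⟩),
        Set.indicator_of_notMem (fun h => absurd (mem_Iio.1 h) (not_lt.2 hx0)),
        Set.indicator_of_mem (mem_Ici.2 hx0),
        Set.indicator_of_mem (mem_Ico.2 ⟨hx0, hx1⟩)]
      ring
    · have hsdw : sdw 1 1 1 (1 + κ / ε) ε x t = 1 := by
        unfold sdw
        rw [if_neg (by push_neg; linarith), if_neg (by push_neg; linarith),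
          if_neg (not_lt.2 hx1)]
      have hfx : twoFlux (fun u => Real.sqrt (u ^ 2 + 1) + 1) (fun u => 1 / Real.sqrt (u ^ 2 + 1))
          x (1:ℝ) = (Real.sqrt 2)⁻¹ := by
        simp only [twoFlux, if_neg (not_lt.2 hx0)]
        norm_num
      rw [hsdw, hfx,
        Set.indicator_of_notMem (fun h => absurd h.2 (not_lt.2 hx1)),
        Set.indicator_of_notMem (fun h => absurd (mem_Iio.1 h) (not_lt.2 hx0)),
        Set.indicator_of_mem (mem_Ici.2 hx0),
        Set.indicator_of_notMem (fun h => absurd h.2 (not_lt.2 hx1))]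
      ring

lemma alg_identity {κ ε w1 w2 b a c2 c3 : ℝ} (hε : ε ≠ 0) :
    κ * (ε⁻¹ * w1) + ((a - c3) * ε * (ε⁻¹ * w2) + (c2 * b + c3 * (-b)))
      = 0 + (κ / ε * w1 + (c2 * b + (c3 * (-b) + (a - c3) * w2))) := by
  field_simp
  ring

lemma part2 (κ : ℝ) (hκdef : κ = (2 + Real.sqrt 2) / 2) :
    WeakAsymptoticSolution (fun u : ℝ => Real.sqrt (u ^ 2 + 1) + 1)
      (fun u : ℝ => 1 / Real.sqrt (u ^ 2 + 1)) 1 1 (fun _ => 1) (fun ε => 1 + κ / ε) := by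
  intro φ hφ
  obtain ⟨hsm, hK, h0⟩ := hφ
  have hc1 := pder_cont hsm ((0:ℝ), (1:ℝ))
  have hh1 := pder_hcs hK ((0:ℝ), (1:ℝ))
  have hc2 := pder_cont hsm ((1:ℝ), (0:ℝ))
  have hh2 := pder_hcs hK ((1:ℝ), (0:ℝ))
  obtain ⟨L1, hL1⟩ := pder_lip hsm hK ((0:ℝ), (1:ℝ))
  obtain ⟨L2, hL2⟩ := pder_lip hsm hK ((1:ℝ), (0:ℝ))
  set B := ∫ t in Ioi (0:ℝ), φ (0, t) with hB
  have hκeq : Real.sqrt 2 + 1 - (Real.sqrt 2)⁻¹ = κ := by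
    have hs : Real.sqrt 2 * Real.sqrt 2 = 2 := Real.mul_self_sqrt (by norm_num)
    have hspos : 0 < Real.sqrt 2 := Real.sqrt_pos.2 (by norm_num)
    rw [hκdef]
    field_simp
    nlinarith [hs]
  -- limit of the first strip term
  have hkey1 := (key hc1 hh1 hL1).const_mul κ
  rw [integral_t_pder_t hsm hK h0] at hkey1
  -- limit of the second strip term
  have hsmall : Tendsto (fun ε : ℝ => (1 / Real.sqrt ((1 + κ / ε) ^ 2 + 1) - (Real.sqrt 2)⁻¹) * ε)
      (𝓝[>] (0:ℝ)) (𝓝 0) := by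
    have hg : Tendsto (fun ε : ℝ => 2 * ε) (𝓝[>] (0:ℝ)) (𝓝 0) := by
      have h2 := (continuous_const.mul continuous_id).tendsto (0:ℝ)
        (f := fun ε : ℝ => (2:ℝ) * ε)
      rw [mul_zero] at h2
      exact h2.mono_left nhdsWithin_le_nhds
    refine squeeze_zero_norm' ?_ hg
    filter_upwards [self_mem_nhdsWithin] with ε (hε : 0 < ε)
    rw [norm_mul, Real.norm_eq_abs, Real.norm_eq_abs, abs_of_pos hε]
    apply mul_le_mul_of_nonneg_right _ hε.le
    calc |1 / Real.sqrt ((1 + κ / ε) ^ 2 + 1) - (Real.sqrt 2)⁻¹|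
        ≤ |1 / Real.sqrt ((1 + κ / ε) ^ 2 + 1)| + |(Real.sqrt 2)⁻¹| := abs_sub _ _
      _ ≤ 1 + 1 := add_le_add (abs_inv_sqrt_le _)
          (by rw [abs_of_nonneg (by positivity)]; exact sqrt_bounds.2)
      _ = 2 := by norm_num
  have hkey2 := hsmall.mul (key hc2 hh2 hL2)
  rw [zero_mul] at hkey2
  -- the combined limit
  have hlim : Tendsto (fun ε : ℝ =>
      κ * (ε⁻¹ * ∫ t in Ioi (0:ℝ), ∫ x in Ico (0:ℝ) (ε * t), pder φ (0, 1) (x, t))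
      + ((1 / Real.sqrt ((1 + κ / ε) ^ 2 + 1) - (Real.sqrt 2)⁻¹) * ε
          * (ε⁻¹ * ∫ t in Ioi (0:ℝ), ∫ x in Ico (0:ℝ) (ε * t), pder φ (1, 0) (x, t))
        + ((Real.sqrt 2 + 1) * B + (Real.sqrt 2)⁻¹ * (-B))))
      (𝓝[>] (0:ℝ)) (𝓝 (κ * (-B) + (0 + ((Real.sqrt 2 + 1) * B + (Real.sqrt 2)⁻¹ * (-B))))) :=
    hkey1.add (hkey2.add tendsto_const_nhds)
  have hzero : κ * (-B) + ((0:ℝ) + ((Real.sqrt 2 + 1) * B + (Real.sqrt 2)⁻¹ * (-B))) = 0 := by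
    linear_combination B * hκeq
  rw [hzero] at hlim
  apply hlim.congr'
  filter_upwards [self_mem_nhdsWithin] with ε (hε : 0 < ε)
  -- now prove the identity for fixed ε > 0
  show _ = ∫ t in Ioi (0:ℝ), ∫ x : ℝ,
      (sdw 1 1 1 (1 + κ / ε) ε x t * pder φ (0, 1) (x, t) +
       twoFlux (fun u : ℝ => Real.sqrt (u ^ 2 + 1) + 1) (fun u : ℝ => 1 / Real.sqrt (u ^ 2 + 1))
         x (sdw 1 1 1 (1 + κ / ε) ε x t) * pder φ (1, 0) (x, t))
  have hinner : EqOn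
      (fun t => (∫ x : ℝ, pder φ (0, 1) (x, t))
        + ((κ / ε) * (∫ x in Ico (0:ℝ) (ε * t), pder φ (0, 1) (x, t))
        + ((Real.sqrt 2 + 1) * (∫ x in Iio (0:ℝ), pder φ (1, 0) (x, t))
        + ((Real.sqrt 2)⁻¹ * (∫ x in Ici (0:ℝ), pder φ (1, 0) (x, t))
        + (1 / Real.sqrt ((1 + κ / ε) ^ 2 + 1) - (Real.sqrt 2)⁻¹)
            * (∫ x in Ico (0:ℝ) (ε * t), pder φ (1, 0) (x, t))))))
      (fun t => ∫ x : ℝ,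
        (sdw 1 1 1 (1 + κ / ε) ε x t * pder φ (0, 1) (x, t) +
         twoFlux (fun u : ℝ => Real.sqrt (u ^ 2 + 1) + 1)
           (fun u : ℝ => 1 / Real.sqrt (u ^ 2 + 1))
           x (sdw 1 1 1 (1 + κ / ε) ε x t) * pder φ (1, 0) (x, t))) (Ioi 0) := by
    intro t ht
    rw [mem_Ioi] at ht
    have hident := flux_mul_eq (κ := κ) hε ht
      (fun x => pder φ (0, 1) (x, t)) (fun x => pder φ (1, 0) (x, t))
    simp only
    have ia := integrable_slice_x hc1 hh1 t
    have ib := integrable_slice_x hc2 hh2 t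
    have X2 := (ia.indicator (measurableSet_Ico (a := (0:ℝ)) (b := ε * t))).const_mul (κ / ε)
    have X3 := (ib.indicator (measurableSet_Iio (a := (0:ℝ)))).const_mul (Real.sqrt 2 + 1)
    have X4 := (ib.indicator (measurableSet_Ici (a := (0:ℝ)))).const_mul ((Real.sqrt 2)⁻¹)
    have X5 := (ib.indicator (measurableSet_Ico (a := (0:ℝ)) (b := ε * t))).const_mul
      (1 / Real.sqrt ((1 + κ / ε) ^ 2 + 1) - (Real.sqrt 2)⁻¹)
    have X45 : Integrable (fun x =>
        (Real.sqrt 2)⁻¹ * (Ici (0:ℝ)).indicator (fun x => pder φ (1, 0) (x, t)) x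
        + (1 / Real.sqrt ((1 + κ / ε) ^ 2 + 1) - (Real.sqrt 2)⁻¹)
            * (Ico (0:ℝ) (ε * t)).indicator (fun x => pder φ (1, 0) (x, t)) x) volume :=
      X4.add X5
    have X345 : Integrable (fun x =>
        (Real.sqrt 2 + 1) * (Iio (0:ℝ)).indicator (fun x => pder φ (1, 0) (x, t)) x
        + ((Real.sqrt 2)⁻¹ * (Ici (0:ℝ)).indicator (fun x => pder φ (1, 0) (x, t)) x
        + (1 / Real.sqrt ((1 + κ / ε) ^ 2 + 1) - (Real.sqrt 2)⁻¹)
            * (Ico (0:ℝ) (ε * t)).indicator (fun x => pder φ (1, 0) (x, t)) x)) volume :=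
      X3.add X45
    have X2345 : Integrable (fun x =>
        (κ / ε) * (Ico (0:ℝ) (ε * t)).indicator (fun x => pder φ (0, 1) (x, t)) x
        + ((Real.sqrt 2 + 1) * (Iio (0:ℝ)).indicator (fun x => pder φ (1, 0) (x, t)) x
        + ((Real.sqrt 2)⁻¹ * (Ici (0:ℝ)).indicator (fun x => pder φ (1, 0) (x, t)) x
        + (1 / Real.sqrt ((1 + κ / ε) ^ 2 + 1) - (Real.sqrt 2)⁻¹)
            * (Ico (0:ℝ) (ε * t)).indicator (fun x => pder φ (1, 0) (x, t)) x))) volume :=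
      X2.add X345
    rw [hident, integral_add ia X2345, integral_add X2 X345, integral_add X3 X45,
      integral_add X4 X5]
    simp only [integral_const_mul, integral_indicator measurableSet_Ico,
      integral_indicator measurableSet_Iio, integral_indicator measurableSet_Ici]
  rw [← setIntegral_congr_fun measurableSet_Ioi hinner]
  have O1 := outer_integrable_univ hc1 hh1
  have O2 := (outer_integrable_strip hc1 hh1 ε).const_mul (κ / ε)
  have O3 := (outer_integrable_left hc2 hh2).const_mul (Real.sqrt 2 + 1)
  have O4 := (outer_integrable_right hc2 hh2).const_mul ((Real.sqrt 2)⁻¹)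
  have O5 := (outer_integrable_strip hc2 hh2 ε).const_mul
    (1 / Real.sqrt ((1 + κ / ε) ^ 2 + 1) - (Real.sqrt 2)⁻¹)
  have O45 : Integrable (fun t =>
      (Real.sqrt 2)⁻¹ * (∫ x in Ici (0:ℝ), pder φ (1, 0) (x, t))
      + (1 / Real.sqrt ((1 + κ / ε) ^ 2 + 1) - (Real.sqrt 2)⁻¹)
          * ∫ x in Ico (0:ℝ) (ε * t), pder φ (1, 0) (x, t)) (volume.restrict (Ioi 0)) :=
    O4.add O5
  have O345 : Integrable (fun t =>
      (Real.sqrt 2 + 1) * (∫ x in Iio (0:ℝ), pder φ (1, 0) (x, t))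
      + ((Real.sqrt 2)⁻¹ * (∫ x in Ici (0:ℝ), pder φ (1, 0) (x, t))
      + (1 / Real.sqrt ((1 + κ / ε) ^ 2 + 1) - (Real.sqrt 2)⁻¹)
          * ∫ x in Ico (0:ℝ) (ε * t), pder φ (1, 0) (x, t))) (volume.restrict (Ioi 0)) :=
    O3.add O45
  have O2345 : Integrable (fun t =>
      (κ / ε) * (∫ x in Ico (0:ℝ) (ε * t), pder φ (0, 1) (x, t))
      + ((Real.sqrt 2 + 1) * (∫ x in Iio (0:ℝ), pder φ (1, 0) (x, t))
      + ((Real.sqrt 2)⁻¹ * (∫ x in Ici (0:ℝ), pder φ (1, 0) (x, t))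
      + (1 / Real.sqrt ((1 + κ / ε) ^ 2 + 1) - (Real.sqrt 2)⁻¹)
          * ∫ x in Ico (0:ℝ) (ε * t), pder φ (1, 0) (x, t)))) (volume.restrict (Ioi 0)) :=
    O2.add O345
  rw [integral_add O1 O2345, integral_add O2 O345, integral_add O3 O45, integral_add O4 O5]
  simp only [integral_const_mul]
  have hE1 : ∫ t in Ioi (0:ℝ), ∫ x : ℝ, pder φ (0, 1) (x, t) = 0 := by
    rw [swap_integral hc1 hh1]
    simp only [integral_Ioi_pder_t hsm hK h0]
    exact integral_zero _ _
  rw [hE1]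
  simp only [integral_Iic_pder_x hsm hK, integral_Ici_pder_x hsm hK]
  rw [integral_neg]
  exact alg_identity hε.ne'


end SdwAux

open SdwAux in
/-- example with square-root fluxes
`f_l(u) = √(u²+1) + 1`, `f_r(u) = 1/√(u²+1)`, `u0 = u1 = 1`, `κ = (2+√2)/2`. -/
theorem example_sqrt_fluxes
    (fl fr : ℝ → ℝ)
    (hfl : fl = fun u : ℝ => Real.sqrt (u ^ 2 + 1) + 1)
    (hfr : fr = fun u : ℝ => 1 / Real.sqrt (u ^ 2 + 1))
    (κ : ℝ) (hκdef : κ = (2 + Real.sqrt 2) / 2)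
    (u0e u1e : ℝ → ℝ)
    (hu0e : u0e = fun _ : ℝ => 1) (hu1e : u1e = fun ε : ℝ => 1 + κ / ε) :
    fl 1 - fr 1 = κ ∧
    WeakAsymptoticSolution fl fr 1 1 u0e u1e ∧
    ConvergesToDeltaShock 1 1 u0e u1e κ := by
  subst hfl hfr hu0e hu1e
  refine ⟨?_, part2 κ hκdef, part3 κ⟩
  have hs : Real.sqrt 2 * Real.sqrt 2 = 2 := Real.mul_self_sqrt (by norm_num)
  have hspos : 0 < Real.sqrt 2 := Real.sqrt_pos.2 (by norm_num)
  show Real.sqrt ((1:ℝ) ^ 2 + 1) + 1 - 1 / Real.sqrt ((1:ℝ) ^ 2 + 1) = κ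
  rw [hκdef]
  norm_num
  field_simp
  nlinarith [hs]
end
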